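/- arXiv:2511.09192 — 8 statements merged into one kernel-verified Lean document; each statement's English description precedes it below -/
import Mathlib

section
/- Suppose B is an observation barrier function (OBF) with level q. Then ℙ(X_{t_i} ∈ O_i for all 1 ≤ i ≤ k, and X_n ∉ U for all n ≤ t_k) ≥ q. -/
/-!
Kill the barrier when the path leaves the guard sets: `Yₙ = 1{Xₘ ∈ Gₘ for all m < n} · B(n, Xₙ)`.
While the path survives, the drift condition makes `Y` a submartingale step; at the moment of exit
`Y` drops from `B(n, Xₙ) ≤ 0` to `0`, which only helps. Hence
`q ≤ B(0, x₀) = 𝔼 Y₀ ≤ 𝔼 Y_{t_k+1} ≤ ℙ(survival up to t_k)`, the last step by `B(t_k + 1, ·) ≤ 1`.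
-/

open MeasureTheory

theorem integral_le_integral_of_le_condExp_succ {Ω : Type*} {m0 : MeasurableSpace Ω}
    {μ : Measure Ω} {𝓕 : Filtration ℕ m0} [SigmaFiniteFiltration μ 𝓕] {f : ℕ → Ω → ℝ} :
    ∀ {N : ℕ}, (∀ n < N, Integrable (f n) μ) → (∀ n < N, f n ≤ᵐ[μ] μ[f (n + 1) | 𝓕 n]) →
      ∫ ω, f 0 ω ∂μ ≤ ∫ ω, f N ω ∂μ
  | 0, _, _ => le_rfl
  | N + 1, hf, hle => calc
      ∫ ω, f 0 ω ∂μ ≤ ∫ ω, f N ω ∂μ :=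
        integral_le_integral_of_le_condExp_succ (fun n hn => hf n (by omega))
          (fun n hn => hle n (by omega))
      _ ≤ ∫ ω, (μ[f (N + 1) | 𝓕 N]) ω ∂μ :=
        integral_mono_ae (hf N N.lt_succ_self) integrable_condExp (hle N N.lt_succ_self)
      _ = ∫ ω, f (N + 1) ω ∂μ := integral_condExp (𝓕.le N)

section Survival

variable {Ω 𝒳 : Type*} {m0 : MeasurableSpace Ω} {G : ℕ → Set 𝒳} {X : ℕ → Ω → 𝒳}

def survivalEvent (G : ℕ → Set 𝒳) (X : ℕ → Ω → 𝒳) (n : ℕ) : Set Ω :=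
  {ω | ∀ m < n, X m ω ∈ G m}

@[simp]
theorem survivalEvent_zero : survivalEvent G X 0 = Set.univ := by
  simp [survivalEvent]

theorem survivalEvent_succ (n : ℕ) :
    survivalEvent G X (n + 1) = survivalEvent G X n ∩ X n ⁻¹' G n := by
  ext ω
  simp only [survivalEvent, Set.mem_inter_iff, Set.mem_preimage, Set.mem_ofPred,
    Nat.lt_succ_iff_lt_or_eq, or_imp, forall_and, forall_eq]

variable [MeasurableSpace 𝒳]

theorem measurableSet_survivalEvent_succ {𝓕 : Filtration ℕ m0} (hG : ∀ n, MeasurableSet (G n))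
    (hX : ∀ n, Measurable[𝓕 n] (X n)) (n : ℕ) :
    MeasurableSet[𝓕 n] (survivalEvent G X (n + 1)) := by
  induction n with
  | zero => simpa [survivalEvent_succ] using hX 0 (hG 0)
  | succ n ih =>
    rw [survivalEvent_succ]
    exact (𝓕.mono n.le_succ _ ih).inter (hX (n + 1) (hG (n + 1)))

theorem measurableSet_survivalEvent {𝓕 : Filtration ℕ m0} (hG : ∀ n, MeasurableSet (G n))
    (hX : ∀ n, Measurable[𝓕 n] (X n)) : ∀ n, MeasurableSet (survivalEvent G X n)
  | 0 => by simp
  | n + 1 => 𝓕.le n _ (measurableSet_survivalEvent_succ hG hX n)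

end Survival

theorem integrable_comp_of_bounded {Ω 𝒳 : Type*} {m0 : MeasurableSpace Ω} [MeasurableSpace 𝒳]
    {μ : Measure Ω} [IsFiniteMeasure μ] {f : Ω → 𝒳} {g : 𝒳 → ℝ} (hf : Measurable f)
    (hg : Measurable g) (hbdd : ∃ C : ℝ, ∀ x, |g x| ≤ C) : Integrable (fun ω => g (f ω)) μ :=
  let ⟨C, hC⟩ := hbdd
  .of_bound (hg.comp hf).aestronglyMeasurable C (ae_of_all _ fun ω => hC (f ω))

section KilledBarrier

variable {Ω 𝒳 : Type*} {m0 : MeasurableSpace Ω} {μ : Measure Ω} {𝓕 : Filtration ℕ m0}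
  {G : ℕ → Set 𝒳} {X : ℕ → Ω → 𝒳} {B : ℕ → 𝒳 → ℝ}

noncomputable def killedBarrier (G : ℕ → Set 𝒳) (B : ℕ → 𝒳 → ℝ) (X : ℕ → Ω → 𝒳) (n : ℕ) :
    Ω → ℝ :=
  (survivalEvent G X n).indicator fun ω => B n (X n ω)

theorem integral_killedBarrier_zero [IsProbabilityMeasure μ] {x₀ : 𝒳}
    (hX0 : ∀ᵐ ω ∂μ, X 0 ω = x₀) :
    ∫ ω, killedBarrier G B X 0 ω ∂μ = B 0 x₀ := by
  rw [integral_congr_ae (g := fun _ => B 0 x₀) (hX0.mono fun ω h => by simp [killedBarrier, h])]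
  simp

variable [MeasurableSpace 𝒳]

theorem killedBarrier_le_condExp (hG : ∀ n, MeasurableSet (G n))
    (hX : ∀ n, Measurable[𝓕 n] (X n)) {n : ℕ}
    (hint : Integrable (fun ω => B (n + 1) (X (n + 1) ω)) μ)
    (hdrift : ∀ᵐ ω ∂μ, X n ω ∈ G n →
      B n (X n ω) ≤ (μ[fun ω => B (n + 1) (X (n + 1) ω) | 𝓕 n]) ω)
    (hnonpos : ∀ x ∉ G n, B n x ≤ 0) :
    killedBarrier G B X n ≤ᵐ[μ] μ[killedBarrier G B X (n + 1) | 𝓕 n] := by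
  filter_upwards [condExp_indicator hint (measurableSet_survivalEvent_succ hG hX n), hdrift]
    with ω hcond hdrift
  unfold killedBarrier
  rw [hcond, survivalEvent_succ]
  by_cases hA : ω ∈ survivalEvent G X n
  · by_cases hGn : X n ω ∈ G n
    · simpa [hA, hGn] using hdrift hGn
    · simpa [hA, hGn] using hnonpos _ hGn
  · simp [hA]

theorem integral_killedBarrier_le_measureReal [IsFiniteMeasure μ] (hG : ∀ n, MeasurableSet (G n))
    (hX : ∀ n, Measurable[𝓕 n] (X n)) {n : ℕ} (hint : Integrable (fun ω => B n (X n ω)) μ)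
    (hB : ∀ x, B n x ≤ 1) :
    ∫ ω, killedBarrier G B X n ω ∂μ ≤ μ.real (survivalEvent G X n) := by
  rw [← integral_indicator_one (measurableSet_survivalEvent hG hX n)]
  exact integral_mono (hint.indicator (measurableSet_survivalEvent hG hX n))
    ((integrable_const 1).indicator (measurableSet_survivalEvent hG hX n))
    fun ω => Set.indicator_le_indicator (hB _)

theorem ofReal_le_measure_survivalEvent [IsProbabilityMeasure μ] (hG : ∀ n, MeasurableSet (G n))
    (hX : ∀ n, Measurable[𝓕 n] (X n)) {x₀ : 𝒳} (hX0 : ∀ᵐ ω ∂μ, X 0 ω = x₀)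
    (hint : ∀ n, Integrable (fun ω => B n (X n ω)) μ) {q : ℝ} {T : ℕ} (h_init : q ≤ B 0 x₀)
    (h_drift : ∀ n ≤ T, ∀ᵐ ω ∂μ, X n ω ∈ G n →
      B n (X n ω) ≤ (μ[fun ω => B (n + 1) (X (n + 1) ω) | 𝓕 n]) ω)
    (h_nonpos : ∀ n ≤ T, ∀ x ∉ G n, B n x ≤ 0) (h_term : ∀ x, B (T + 1) x ≤ 1) :
    ENNReal.ofReal q ≤ μ (survivalEvent G X (T + 1)) := by
  have hmono : ∫ ω, killedBarrier G B X 0 ω ∂μ ≤ ∫ ω, killedBarrier G B X (T + 1) ω ∂μ :=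
    integral_le_integral_of_le_condExp_succ
      (fun n _ => (hint n).indicator (measurableSet_survivalEvent hG hX n)) fun n hn =>
      killedBarrier_le_condExp hG hX (hint (n + 1))
        (h_drift n (by omega)) (h_nonpos n (by omega))
  rw [← ofReal_measureReal]
  refine ENNReal.ofReal_le_ofReal ?_
  calc q ≤ B 0 x₀ := h_init
    _ = ∫ ω, killedBarrier G B X 0 ω ∂μ := (integral_killedBarrier_zero hX0).symm
    _ ≤ ∫ ω, killedBarrier G B X (T + 1) ω ∂μ := hmono
    _ ≤ μ.real (survivalEvent G X (T + 1)) :=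
      integral_killedBarrier_le_measureReal hG hX (hint _) h_term

end KilledBarrier

section Observation

variable {𝒳 ι : Type*}

def guardSet (U : Set 𝒳) (t : ι → ℕ) (O : ι → Set 𝒳) (n : ℕ) : Set 𝒳 :=
  {x | x ∉ U ∧ ∀ i, t i = n → x ∈ O i}

theorem measurableSet_guardSet [MeasurableSpace 𝒳] [Countable ι] {U : Set 𝒳} {t : ι → ℕ}
    {O : ι → Set 𝒳} (hU : MeasurableSet U) (hO : ∀ i, MeasurableSet (O i)) (n : ℕ) :
    MeasurableSet (guardSet U t O n) := by
  have : guardSet U t O n = Uᶜ ∩ ⋂ i, ⋂ (_ : t i = n), O i := by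
    ext x
    simp [guardSet]
  rw [this]
  exact hU.compl.inter (.iInter fun i => .iInter fun _ => hO i)

theorem survivalEvent_guardSet_subset {Ω : Type*} {X : ℕ → Ω → 𝒳} {U : Set 𝒳} {k : ℕ}
    {t : Fin (k + 1) → ℕ} (ht : Monotone t) (O : Fin (k + 1) → Set 𝒳) :
    survivalEvent (guardSet U t O) X (t (Fin.last k) + 1) ⊆
      {ω | (∀ i, X (t i) ω ∈ O i) ∧ ∀ n ≤ t (Fin.last k), X n ω ∉ U} := fun _ hω =>
  ⟨fun i => (hω (t i) (Nat.lt_succ_of_le (ht (Fin.le_last i)))).2 i rfl,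
    fun n hn => (hω n (Nat.lt_succ_of_le hn)).1⟩

end Observation

/-- If `B` is an observation barrier function (OBF) with level `q`, then
`ℙ(X_{t_i} ∈ O_i for all i, and X_n ∉ U for all n ≤ t_k) ≥ q`. -/
theorem obf_observation_guarantee
    {Ω : Type*} {m0 : MeasurableSpace Ω} (ℙ : Measure Ω) [IsProbabilityMeasure ℙ]
    (𝓕 : Filtration ℕ m0)
    {𝒳 : Type*} [MeasurableSpace 𝒳]
    (X : ℕ → Ω → 𝒳) (hX_adapted : ∀ n, Measurable[𝓕 n] (X n))
    (x₀ : 𝒳) (hX0 : ∀ᵐ ω ∂ℙ, X 0 ω = x₀)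
    (U : Set 𝒳) (hU : MeasurableSet U)
    (k : ℕ) (t : Fin (k + 1) → ℕ) (ht : StrictMono t)
    (O : Fin (k + 1) → Set 𝒳) (hO : ∀ i, MeasurableSet (O i))
    (B : ℕ → 𝒳 → ℝ)
    (hB_meas : ∀ n, Measurable (B n))
    (hB_bdd : ∀ n, ∃ C : ℝ, ∀ x, |B n x| ≤ C)
    (q : ℝ)
    -- (i) initial condition
    (h_init : q ≤ B 0 x₀)
    -- (ii) submartingale (drift) condition on the guard set `G n`
    (h_drift : ∀ n ≤ t (Fin.last k), ∀ᵐ ω ∂ℙ,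
      (X n ω ∉ U ∧ ∀ i, t i = n → X n ω ∈ O i) →
        B n (X n ω) ≤ (ℙ[fun ω' => B (n + 1) (X (n + 1) ω') | 𝓕 n]) ω)
    -- (iii) nonpositivity outside the guard set
    (h_nonpos : ∀ n ≤ t (Fin.last k), ∀ x : 𝒳,
      ¬(x ∉ U ∧ ∀ i, t i = n → x ∈ O i) → B n x ≤ 0)
    -- (iv) terminal bound
    (h_term : ∀ x : 𝒳, B (t (Fin.last k) + 1) x ≤ 1) :
    ENNReal.ofReal q ≤
      ℙ {ω | (∀ i, X (t i) ω ∈ O i) ∧ ∀ n ≤ t (Fin.last k), X n ω ∉ U} :=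
  (ofReal_le_measure_survivalEvent (measurableSet_guardSet hU hO) hX_adapted hX0
    (fun n => integrable_comp_of_bounded ((hX_adapted n).mono (𝓕.le n) le_rfl) (hB_meas n)
      (hB_bdd n)) h_init h_drift h_nonpos h_term).trans
    (measure_mono (survivalEvent_guardSet_subset ht.monotone O))
end

section
/- Suppose B is an observation-safety barrier function (OSBF) with level p. Then ℙ((∃ n ∈ ℕ, X_n ∈ U) and X_{t_i} ∈ O_i for all 1 ≤ i ≤ k) ≤ p. -/
open MeasureTheory

/-- If `B` is an observation-safety barrier function (OSBF) with level `p`, then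
`ℙ((∃ n, X_n ∈ U) and X_{t_i} ∈ O_i for all i) ≤ p`. -/
theorem osbf_safety_guarantee
    {Ω : Type*} {m0 : MeasurableSpace Ω} (ℙ : Measure Ω) [IsProbabilityMeasure ℙ]
    (𝓕 : Filtration ℕ m0)
    {𝒳 : Type*} [MeasurableSpace 𝒳]
    (X : ℕ → Ω → 𝒳) (hX_adapted : ∀ n, Measurable[𝓕 n] (X n))
    (x₀ : 𝒳) (hX0 : ∀ᵐ ω ∂ℙ, X 0 ω = x₀)
    (U : Set 𝒳) (hU : MeasurableSet U)
    (k : ℕ) (t : Fin (k + 1) → ℕ) (ht : StrictMono t)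
    (O : Fin (k + 1) → Set 𝒳) (hO : ∀ i, MeasurableSet (O i))
    (B : ℕ → 𝒳 → ℝ)
    (hB_meas : ∀ n, Measurable (B n))
    (hB_bdd : ∀ n, ∃ C : ℝ, ∀ x, |B n x| ≤ C)
    (p : ℝ)
    -- (i) nonnegativity
    (h_nonneg : ∀ n, ∀ x : 𝒳, 0 ≤ B n x)
    -- (ii) initial condition
    (h_init : B 0 x₀ ≤ p)
    -- (iii) barrier at least 1 on the unsafe set
    (h_unsafe : ∀ n, ∀ x ∈ U, 1 ≤ B n x)
    -- (iv) supermartingale (drift) condition on the guard set `G n`, for `n ≤ t_k`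
    (h_drift₁ : ∀ n ≤ t (Fin.last k), ∀ᵐ ω ∂ℙ,
      (X n ω ∉ U ∧ ∀ i, t i = n → X n ω ∈ O i) →
        (ℙ[fun ω' => B (n + 1) (X (n + 1) ω') | 𝓕 n]) ω ≤ B n (X n ω))
    -- (v) supermartingale (drift) condition outside `U`, for `n > t_k`
    (h_drift₂ : ∀ n, t (Fin.last k) < n → ∀ᵐ ω ∂ℙ,
      X n ω ∉ U → (ℙ[fun ω' => B (n + 1) (X (n + 1) ω') | 𝓕 n]) ω ≤ B n (X n ω)) :
    ℙ {ω | (∃ n, X n ω ∈ U) ∧ ∀ i, X (t i) ω ∈ O i} ≤ ENNReal.ofReal p := by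
  classical
  -- the guard sets and the "support" sets
  set T : ℕ → Set 𝒳 := fun n => ⋂ i, {x | t i = n → x ∈ O i} with hT
  set G : ℕ → Set 𝒳 := fun n => Uᶜ ∩ T n with hG
  set A : ℕ → Set 𝒳 := fun n => U ∪ T n with hA
  have hGA : ∀ n, G n ⊆ A n := by
    intro n x hx
    exact Or.inr hx.2
  have hUA : ∀ n, U ⊆ A n := fun n => Set.subset_union_left
  have hTmeas : ∀ n, MeasurableSet (T n) := by
    intro n
    rw [hT]
    refine MeasurableSet.iInter fun i => ?_
    by_cases h : t i = n
    · simpa [h] using hO i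
    · simp [h]
  have hGmeas : ∀ n, MeasurableSet (G n) := fun n => hU.compl.inter (hTmeas n)
  have hAmeas : ∀ n, MeasurableSet (A n) := fun n => hU.union (hTmeas n)
  have hXm : ∀ n, Measurable (X n) := fun n => (hX_adapted n).mono (𝓕.le n) le_rfl
  -- one-step values
  set N : ℕ → Ω → ℝ := fun n ω => (A n).indicator (B n) (X n ω) with hN
  have hNmeas : ∀ n, Measurable (N n) := fun n =>
    ((hB_meas n).indicator (hAmeas n)).comp (hXm n)
  have hNnonneg : ∀ n ω, 0 ≤ N n ω := fun n ω =>
    Set.indicator_nonneg (fun x _ => h_nonneg n x) _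
  have hNle : ∀ n ω, N n ω ≤ B n (X n ω) := fun n ω =>
    Set.indicator_le_self' (fun x _ => h_nonneg n x) _
  have hNeq : ∀ n ω, X n ω ∈ A n → N n ω = B n (X n ω) := fun n ω h =>
    Set.indicator_of_mem h _
  choose C hC using hB_bdd
  have hNbd : ∀ n ω, |N n ω| ≤ C n := by
    intro n ω
    simp only [hN]
    by_cases h : X n ω ∈ A n
    · rw [Set.indicator_of_mem h]; exact hC n _
    · rw [Set.indicator_of_notMem h]
      simpa using (abs_nonneg (B n (X n ω))).trans (hC n (X n ω))
  -- the "stopped" sets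
  set S : ℕ → Set Ω := fun n => ⋃ m ∈ Set.Iic n, X m ⁻¹' (G m)ᶜ with hS
  have hSmem : ∀ n ω, ω ∉ S n ↔ ∀ m ≤ n, X m ω ∈ G m := by
    intro n ω
    rw [hS]
    simp
  have hSmemI : ∀ n ω m, m ≤ n → X m ω ∉ G m → ω ∈ S n := by
    intro n ω m hm hx
    rw [hS]
    exact Set.mem_biUnion hm hx
  have hSmono : Monotone S := by
    intro a b hab
    rw [hS]
    exact Set.biUnion_subset_biUnion_left (Set.Iic_subset_Iic.mpr hab)
  have hSmeasF : ∀ n, MeasurableSet[𝓕 n] (S n) := by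
    intro n
    rw [hS]
    refine MeasurableSet.biUnion (Set.to_countable _) fun m hm => ?_
    exact 𝓕.mono hm _ (hX_adapted m (hGmeas m).compl)
  have hSmeas : ∀ n, MeasurableSet (S n) := fun n => 𝓕.le n _ (hSmeasF n)
  -- the stopped process
  set M : ℕ → Ω → ℝ := fun n =>
    Nat.rec (N 0) (fun n Mn ω => if ω ∈ S n then Mn ω else N (n + 1) ω) n with hM
  have hM0 : ∀ ω, M 0 ω = N 0 ω := fun ω => rfl
  have hMsucc : ∀ n ω, M (n + 1) ω = if ω ∈ S n then M n ω else N (n + 1) ω := fun n ω => rfl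
  have hMmeas : ∀ n, Measurable (M n) := by
    intro n
    induction n with
    | zero => exact hNmeas 0
    | succ n ih =>
      have : M (n + 1) = fun ω => if ω ∈ S n then M n ω else N (n + 1) ω := funext (hMsucc n)
      rw [this]
      exact Measurable.ite (hSmeas n) ih (hNmeas (n + 1))
  have hMbd : ∀ n, ∃ D, ∀ ω, |M n ω| ≤ D := by
    intro n
    induction n with
    | zero => exact ⟨C 0, fun ω => hNbd 0 ω⟩
    | succ n ih =>
      obtain ⟨D, hD⟩ := ih
      refine ⟨max D (C (n + 1)), fun ω => ?_⟩
      rw [hMsucc]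
      by_cases h : ω ∈ S n
      · rw [if_pos h]; exact (hD ω).trans (le_max_left _ _)
      · rw [if_neg h]; exact (hNbd (n + 1) ω).trans (le_max_right _ _)
  have hMnonneg : ∀ n ω, 0 ≤ M n ω := by
    intro n
    induction n with
    | zero => exact fun ω => hNnonneg 0 ω
    | succ n ih =>
      intro ω
      rw [hMsucc]
      by_cases h : ω ∈ S n
      · rw [if_pos h]; exact ih ω
      · rw [if_neg h]; exact hNnonneg (n + 1) ω
  -- on the unstopped set, M agrees with B ∘ X
  have hMeqB : ∀ n ω, ω ∉ S n → M n ω = B n (X n ω) := by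
    intro n ω hω
    cases n with
    | zero =>
      rw [hM0]
      exact hNeq 0 ω (hGA 0 ((hSmem 0 ω).mp hω 0 le_rfl))
    | succ n =>
      have hn : ω ∉ S n := fun h => hω (hSmono (Nat.le_succ n) h)
      rw [hMsucc, if_neg hn]
      exact hNeq (n + 1) ω (hGA (n + 1) ((hSmem (n + 1) ω).mp hω (n + 1) le_rfl))
  -- once stopped, M is frozen
  have hstick : ∀ m n ω, m ≤ n → ω ∈ S m → M n ω = M m ω := by
    intro m n ω hmn hω
    induction n, hmn using Nat.le_induction with
    | base => rfl
    | succ n hmn ih =>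
      rw [hMsucc, if_pos (hSmono hmn hω), ih]
  -- when U is hit for the first time while guards held, M equals B there
  have hMU : ∀ m ω, X m ω ∈ U → (∀ j < m, X j ω ∈ G j) → M m ω = B m (X m ω) := by
    intro m ω hUm hprev
    cases m with
    | zero => rw [hM0]; exact hNeq 0 ω (hUA 0 hUm)
    | succ m =>
      have hn : ω ∉ S m := by
        rw [hSmem]
        intro j hj
        exact hprev j (Nat.lt_succ_of_le hj)
      rw [hMsucc, if_neg hn]
      exact hNeq (m + 1) ω (hUA (m + 1) hUm)
  -- integrability
  have hkey : ∀ (f : Ω → ℝ) (D : ℝ), Measurable f → (∀ ω, |f ω| ≤ D) → Integrable f ℙ := by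
    intro f D hf hD
    exact (integrable_const D).mono' hf.aestronglyMeasurable
      (Filter.Eventually.of_forall (by simpa [Real.norm_eq_abs] using hD))
  have hMint : ∀ n, Integrable (M n) ℙ := by
    intro n
    obtain ⟨D, hD⟩ := hMbd n
    exact hkey (M n) D (hMmeas n) hD
  have hBXint : ∀ n, Integrable (fun ω => B n (X n ω)) ℙ := fun n =>
    hkey _ (C n) ((hB_meas n).comp (hXm n)) (fun ω => hC n (X n ω))
  have hNint : ∀ n, Integrable (N n) ℙ := fun n =>
    hkey (N n) (C n) (hNmeas n) (fun ω => hNbd n ω)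
  -- the combined drift condition
  have hdrift : ∀ n, ∀ᵐ ω ∂ℙ, X n ω ∈ G n →
      (ℙ[fun ω' => B (n + 1) (X (n + 1) ω') | 𝓕 n]) ω ≤ B n (X n ω) := by
    intro n
    rcases le_or_gt n (t (Fin.last k)) with h | h
    · filter_upwards [h_drift₁ n h] with ω hω hg
      refine hω ⟨hg.1, fun i hi => ?_⟩
      have := Set.mem_iInter.mp hg.2 i
      exact this hi
    · filter_upwards [h_drift₂ n h] with ω hω hg
      exact hω hg.1
  -- the supermartingale step
  have hstep : ∀ n, ∫ ω, M (n + 1) ω ∂ℙ ≤ ∫ ω, M n ω ∂ℙ := by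
    intro n
    have hrw : (fun ω => M (n + 1) ω)
        = (S n).indicator (M n) + (S n)ᶜ.indicator (N (n + 1)) := by
      funext ω
      rw [hMsucc]
      by_cases h : ω ∈ S n
      · simp [Set.indicator_of_mem h, Set.indicator_of_notMem (by simpa using h :
          ω ∉ (S n)ᶜ), if_pos h]
      · simp [Set.indicator_of_notMem h, Set.indicator_of_mem (by simpa using h :
          ω ∈ (S n)ᶜ), if_neg h]
    have hint1 : Integrable ((S n).indicator (M n)) ℙ := (hMint n).indicator (hSmeas n)
    have hint2 : Integrable ((S n)ᶜ.indicator (N (n + 1))) ℙ :=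
      (hNint (n + 1)).indicator (hSmeas n).compl
    have h1 : ∫ ω, M (n + 1) ω ∂ℙ
        = (∫ ω in S n, M n ω ∂ℙ) + ∫ ω in (S n)ᶜ, N (n + 1) ω ∂ℙ := by
      have hrw2 : ∫ ω, M (n + 1) ω ∂ℙ
          = ∫ ω, ((S n).indicator (M n) ω + (S n)ᶜ.indicator (N (n + 1)) ω) ∂ℙ := by
        congr 1
      rw [hrw2, integral_add hint1 hint2, integral_indicator (hSmeas n),
        integral_indicator (hSmeas n).compl]
    have h2 : ∫ ω in (S n)ᶜ, N (n + 1) ω ∂ℙ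
        ≤ ∫ ω in (S n)ᶜ, B (n + 1) (X (n + 1) ω) ∂ℙ :=
      setIntegral_mono ((hNint (n + 1)).integrableOn) ((hBXint (n + 1)).integrableOn)
        (fun ω => hNle (n + 1) ω)
    have h3 : ∫ ω in (S n)ᶜ, B (n + 1) (X (n + 1) ω) ∂ℙ
        = ∫ ω in (S n)ᶜ, (ℙ[fun ω' => B (n + 1) (X (n + 1) ω') | 𝓕 n]) ω ∂ℙ :=
      (setIntegral_condExp (𝓕.le n) (hBXint (n + 1)) (hSmeasF n).compl).symm
    have h4 : ∫ ω in (S n)ᶜ, (ℙ[fun ω' => B (n + 1) (X (n + 1) ω') | 𝓕 n]) ω ∂ℙ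
        ≤ ∫ ω in (S n)ᶜ, M n ω ∂ℙ := by
      refine setIntegral_mono_on_ae (integrable_condExp.integrableOn)
        ((hMint n).integrableOn) (hSmeas n).compl ?_
      filter_upwards [hdrift n] with ω hω hmem
      have hns : ω ∉ S n := hmem
      have hg : X n ω ∈ G n := (hSmem n ω).mp hns n le_rfl
      rw [hMeqB n ω hns]
      exact hω hg
    calc ∫ ω, M (n + 1) ω ∂ℙ
        = (∫ ω in S n, M n ω ∂ℙ) + ∫ ω in (S n)ᶜ, N (n + 1) ω ∂ℙ := h1
      _ ≤ (∫ ω in S n, M n ω ∂ℙ) + ∫ ω in (S n)ᶜ, M n ω ∂ℙ := by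
          exact add_le_add (le_refl _) (h2.trans (h3.le.trans h4))
      _ = ∫ ω, M n ω ∂ℙ := integral_add_compl (hSmeas n) (hMint n)
  -- the initial bound
  have hM0le : ∫ ω, M 0 ω ∂ℙ ≤ p := by
    have hle : ∀ᵐ ω ∂ℙ, M 0 ω ≤ B 0 x₀ := by
      filter_upwards [hX0] with ω h
      rw [hM0]
      calc N 0 ω ≤ B 0 (X 0 ω) := hNle 0 ω
        _ = B 0 x₀ := by rw [h]
    calc ∫ ω, M 0 ω ∂ℙ ≤ ∫ _ω, B 0 x₀ ∂ℙ :=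
          integral_mono_ae (hMint 0) (integrable_const _) hle
      _ = B 0 x₀ := by simp
      _ ≤ p := h_init
  have hMle : ∀ n, ∫ ω, M n ω ∂ℙ ≤ p := by
    intro n
    induction n with
    | zero => exact hM0le
    | succ n ih => exact (hstep n).trans ih
  -- the events
  set Ev : ℕ → Set Ω := fun n =>
    ⋃ m ∈ Set.Iic n, (X m ⁻¹' U ∩ ⋂ j ∈ Set.Iio m, X j ⁻¹' G j) with hEv
  have hEvmem : ∀ n ω, ω ∈ Ev n ↔ ∃ m ≤ n, X m ω ∈ U ∧ ∀ j < m, X j ω ∈ G j := by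
    intro n ω
    rw [hEv]
    simp only [Set.mem_iUnion, Set.mem_Iic, Set.mem_inter_iff, Set.mem_preimage,
      Set.mem_iInter, Set.mem_Iio, exists_prop]
  have hEvmeas : ∀ n, MeasurableSet (Ev n) := by
    intro n
    rw [hEv]
    refine MeasurableSet.biUnion (Set.to_countable _) fun m _ => ?_
    exact ((hXm m) hU).inter
      (MeasurableSet.biInter (Set.to_countable _) fun j _ => (hXm j) (hGmeas j))
  have hEvmono : Monotone Ev := by
    intro a b hab
    rw [hEv]
    exact Set.biUnion_subset_biUnion_left (Set.Iic_subset_Iic.mpr hab)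
  have hEvM : ∀ n ω, ω ∈ Ev n → 1 ≤ M n ω := by
    intro n ω hω
    obtain ⟨m, hmn, hUm, hprev⟩ := (hEvmem n ω).mp hω
    have h1 : M m ω = B m (X m ω) := hMU m ω hUm hprev
    have hSm : ω ∈ S m := hSmemI m ω m le_rfl (fun hg => hg.1 hUm)
    rw [hstick m n ω hmn hSm, h1]
    exact h_unsafe m _ hUm
  -- each event has probability at most p
  have hEvle : ∀ n, ℙ (Ev n) ≤ ENNReal.ofReal p := by
    intro n
    have hind : ∀ ω, (Ev n).indicator (fun _ => (1 : ℝ)) ω ≤ M n ω := by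
      intro ω
      by_cases h : ω ∈ Ev n
      · rw [Set.indicator_of_mem h]; exact hEvM n ω h
      · rw [Set.indicator_of_notMem h]; exact hMnonneg n ω
    have h1 : (ℙ (Ev n)).toReal ≤ p := by
      calc (ℙ (Ev n)).toReal
          = ∫ ω, (Ev n).indicator (fun _ => (1 : ℝ)) ω ∂ℙ := by
            rw [integral_indicator_const (1 : ℝ) (hEvmeas n)]; simp; rfl
        _ ≤ ∫ ω, M n ω ∂ℙ :=
            integral_mono ((integrable_const 1).indicator (hEvmeas n)) (hMint n) hind
        _ ≤ p := hMle n
    calc ℙ (Ev n) = ENNReal.ofReal ((ℙ (Ev n)).toReal) :=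
          (ENNReal.ofReal_toReal (measure_ne_top _ _)).symm
      _ ≤ ENNReal.ofReal p := ENNReal.ofReal_le_ofReal h1
  -- the target event is contained in the union of the events
  have hsub : {ω | (∃ n, X n ω ∈ U) ∧ ∀ i, X (t i) ω ∈ O i} ⊆ ⋃ n, Ev n := by
    rintro ω ⟨⟨n, hn⟩, hobs⟩
    have hex : ∃ n, X n ω ∈ U := ⟨n, hn⟩
    set m := Nat.find hex with hm
    refine Set.mem_iUnion.mpr ⟨m, (hEvmem m ω).mpr ⟨m, le_rfl, Nat.find_spec hex, ?_⟩⟩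
    intro j hj
    constructor
    · exact Nat.find_min hex hj
    · rw [hT]
      refine Set.mem_iInter.mpr fun i => ?_
      intro hti
      rw [← hti]
      exact hobs i
  calc ℙ {ω | (∃ n, X n ω ∈ U) ∧ ∀ i, X (t i) ω ∈ O i}
      ≤ ℙ (⋃ n, Ev n) := measure_mono hsub
    _ = ⨆ n, ℙ (Ev n) := hEvmono.measure_iUnion
    _ ≤ ENNReal.ofReal p := iSup_le hEvle
end

section
/- Suppose B is an observation-safety barrier function (OSBF) with level p, and let τ := inf{n ∈ ℕ : X_n ∈ U}, which is a stopping time with respect to (𝓕_n). Then the stopped process (Y_{n∧τ})_{n∈ℕ} is a supermartingale with respect to (𝓕_n): for every n ∈ ℕ, E[Y_{(n+1)∧τ} | 𝓕_n] ≤ Y_{n∧τ} almost surely. -/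
open MeasureTheory

/-- The process `Y n = (∏_{i<n} 1[X_i ∉ U]) ⬝ (∏_{t_i < n} 1[X_{t_i} ∈ O_i]) ⬝ B(n, X_n)`. -/
noncomputable def Yproc {Ω 𝒳 : Type*} (X : ℕ → Ω → 𝒳) (U : Set 𝒳) {k : ℕ}
    (t : Fin (k + 1) → ℕ) (O : Fin (k + 1) → Set 𝒳) (B : ℕ → 𝒳 → ℝ)
    (n : ℕ) (ω : Ω) : ℝ :=
  (∏ i ∈ Finset.range n, Set.indicator Uᶜ (fun _ => (1 : ℝ)) (X i ω)) *
    ((∏ i ∈ Finset.univ.filter (fun i : Fin (k + 1) => t i < n),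
        Set.indicator (O i) (fun _ => (1 : ℝ)) (X (t i) ω)) *
      B n (X n ω))

/-- The (extended-natural-valued) first hitting time of a set `S` by the process `X`:
`τ(ω) = inf {n : ℕ | X n ω ∈ S}`, equal to `∞` if `X` never enters `S`. -/
noncomputable def hitTime {Ω 𝒳 : Type*} (X : ℕ → Ω → 𝒳) (S : Set 𝒳) (ω : Ω) : ℕ∞ :=
  ⨅ (n : ℕ) (_ : X n ω ∈ S), (n : ℕ∞)

lemma hitTime_le_iff {Ω 𝒳 : Type*} (X : ℕ → Ω → 𝒳) (S : Set 𝒳) (ω : Ω) (n : ℕ) :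
    hitTime X S ω ≤ (n : ℕ∞) ↔ ∃ i ≤ n, X i ω ∈ S := by
  constructor
  · intro h
    by_contra hc
    push_neg at hc
    have h1 : (n : ℕ∞) + 1 ≤ hitTime X S ω := by
      refine le_iInf fun i => le_iInf fun hi => ?_
      have hni : n < i := by
        by_contra h'
        exact hc i (not_lt.mp h') hi
      exact_mod_cast Nat.succ_le_of_lt hni
    exact absurd ((ENat.add_one_le_iff (by simp)).mp (le_trans h1 h)) (lt_irrefl _)
  · rintro ⟨i, hi, hXi⟩
    exact le_trans (iInf₂_le i hXi) (by exact_mod_cast hi)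

lemma hitTime_eq_coe_iff {Ω 𝒳 : Type*} (X : ℕ → Ω → 𝒳) (S : Set 𝒳) (ω : Ω) (m : ℕ) :
    hitTime X S ω = (m : ℕ∞) ↔ X m ω ∈ S ∧ ∀ i < m, X i ω ∉ S := by
  constructor
  · intro h
    have h2 : ∀ i < m, X i ω ∉ S := by
      intro i hi hXi
      have hle : hitTime X S ω ≤ (i : ℕ∞) := iInf₂_le i hXi
      rw [h] at hle
      exact absurd (by exact_mod_cast hle : m ≤ i) (not_le.mpr hi)
    obtain ⟨i, him, hXi⟩ := (hitTime_le_iff X S ω m).mp h.le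
    rcases lt_or_eq_of_le him with h' | h'
    · exact absurd hXi (h2 i h')
    · exact ⟨h' ▸ hXi, h2⟩
  · rintro ⟨hm, hlt⟩
    refine le_antisymm (iInf₂_le m hm) (le_iInf fun i => le_iInf fun hXi => ?_)
    have : m ≤ i := by
      by_contra h'
      exact hlt i (not_le.mp h') hXi
    exact_mod_cast this

/-- If `B` is an OSBF with level `p` and `τ = inf {n | X_n ∈ U}` (a stopping time
w.r.t. `𝓕`), then the stopped process `(Y_{n ∧ τ})_n` is a supermartingale w.r.t. `𝓕`:
for every `n`, `E[Y_{(n+1) ∧ τ} | 𝓕_n] ≤ Y_{n ∧ τ}` almost surely. -/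
theorem osbf_stopped_supermartingale
    {Ω : Type*} {m0 : MeasurableSpace Ω} (ℙ : Measure Ω) [IsProbabilityMeasure ℙ]
    (𝓕 : Filtration ℕ m0)
    {𝒳 : Type*} [MeasurableSpace 𝒳]
    (X : ℕ → Ω → 𝒳) (hX_adapted : ∀ n, Measurable[𝓕 n] (X n))
    (x₀ : 𝒳) (hX0 : ∀ᵐ ω ∂ℙ, X 0 ω = x₀)
    (U : Set 𝒳) (hU : MeasurableSet U)
    (k : ℕ) (t : Fin (k + 1) → ℕ) (ht : StrictMono t)
    (O : Fin (k + 1) → Set 𝒳) (hO : ∀ i, MeasurableSet (O i))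
    (B : ℕ → 𝒳 → ℝ)
    (hB_meas : ∀ n, Measurable (B n))
    (hB_bdd : ∀ n, ∃ C : ℝ, ∀ x, |B n x| ≤ C)
    (p : ℝ)
    -- (i) nonnegativity
    (h_nonneg : ∀ n, ∀ x : 𝒳, 0 ≤ B n x)
    -- (ii) initial condition
    (h_init : B 0 x₀ ≤ p)
    -- (iii) barrier at least 1 on the unsafe set
    (h_unsafe : ∀ n, ∀ x ∈ U, 1 ≤ B n x)
    -- (iv) supermartingale (drift) condition on the guard set `G n`, for `n ≤ t_k`
    (h_drift₁ : ∀ n ≤ t (Fin.last k), ∀ᵐ ω ∂ℙ,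
      (X n ω ∉ U ∧ ∀ i, t i = n → X n ω ∈ O i) →
        (ℙ[fun ω' => B (n + 1) (X (n + 1) ω') | 𝓕 n]) ω ≤ B n (X n ω))
    -- (v) supermartingale (drift) condition outside `U`, for `n > t_k`
    (h_drift₂ : ∀ n, t (Fin.last k) < n → ∀ᵐ ω ∂ℙ,
      X n ω ∉ U → (ℙ[fun ω' => B (n + 1) (X (n + 1) ω') | 𝓕 n]) ω ≤ B n (X n ω)) :
    -- `τ` is a stopping time w.r.t. `𝓕`
    (∀ n : ℕ, MeasurableSet[𝓕 n] {ω | hitTime X U ω ≤ (n : ℕ∞)}) ∧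
    -- the stopped process is a supermartingale
    (∀ n : ℕ, ∀ᵐ ω ∂ℙ,
      (ℙ[fun ω' => Yproc X U t O B ((min (↑(n + 1)) (hitTime X U ω')).toNat) ω' | 𝓕 n]) ω ≤
        Yproc X U t O B ((min (↑n) (hitTime X U ω)).toNat) ω) := by
  classical
  have hle : ∀ {i n : ℕ}, i ≤ n → Measurable[𝓕 n] (X i) :=
    fun {i n} h => (hX_adapted i).mono (𝓕.mono h) le_rfl
  -- Part 1: stopping time
  have hstop : ∀ n : ℕ, MeasurableSet[𝓕 n] {ω | hitTime X U ω ≤ (n : ℕ∞)} := by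
    intro n
    have hset : {ω | hitTime X U ω ≤ (n : ℕ∞)} = ⋃ i ∈ Finset.range (n + 1), X i ⁻¹' U := by
      ext ω
      simp [hitTime_le_iff, Nat.lt_succ_iff]
    rw [hset]
    exact (Finset.range (n + 1)).measurableSet_biUnion fun i hi =>
      hle (Nat.lt_succ_iff.mp (Finset.mem_range.mp hi)) hU
  refine ⟨hstop, fun n => ?_⟩
  set Y : ℕ → Ω → ℝ := Yproc X U t O B with hYdef
  set τ : Ω → ℕ∞ := hitTime X U with hτdef
  -- basic characterizations
  have hA_iff : ∀ ω, ((n : ℕ∞) < τ ω ↔ ∀ i ≤ n, X i ω ∉ U) := by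
    intro ω
    rw [← not_le, hτdef, hitTime_le_iff]
    push_neg
    rfl
  -- min facts
  have hmin_n : ∀ ω, (∀ i ≤ n, X i ω ∉ U) → (min (↑n) (τ ω)).toNat = n := by
    intro ω hω
    rw [min_eq_left ((hA_iff ω).mpr hω).le, ENat.toNat_coe]
  have hmin_n1 : ∀ ω, (∀ i ≤ n, X i ω ∉ U) → (min (↑(n + 1)) (τ ω)).toNat = n + 1 := by
    intro ω hω
    have h1 : ((n : ℕ∞)) + 1 ≤ τ ω :=
      (ENat.add_one_le_iff (by simp)).mpr ((hA_iff ω).mpr hω)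
    have h2 : ((n + 1 : ℕ) : ℕ∞) ≤ τ ω := by
      push_cast
      exact h1
    rw [min_eq_left h2, ENat.toNat_coe]
  have hmin_stop : ∀ ω, ¬ (∀ i ≤ n, X i ω ∉ U) →
      (min (↑(n + 1)) (τ ω)).toNat = (min (↑n) (τ ω)).toNat := by
    intro ω hω
    have h : τ ω ≤ (n : ℕ∞) := by
      by_contra h'
      exact hω ((hA_iff ω).mp (not_le.mp h'))
    rw [min_eq_right h, min_eq_right (le_trans h (by exact_mod_cast Nat.le_succ n))]
  -- nonnegativity / bounds of indicators and Y
  have hind_nonneg : ∀ (S : Set 𝒳) (x : 𝒳), (0 : ℝ) ≤ Set.indicator S (fun _ => (1 : ℝ)) x :=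
    fun S x => Set.indicator_nonneg (fun _ _ => zero_le_one) x
  have hind_le_one : ∀ (S : Set 𝒳) (x : 𝒳), Set.indicator S (fun _ => (1 : ℝ)) x ≤ 1 := by
    intro S x
    by_cases h : x ∈ S <;> simp [h]
  have hY_nonneg : ∀ m ω, 0 ≤ Y m ω := by
    intro m ω
    refine mul_nonneg (Finset.prod_nonneg fun i _ => hind_nonneg _ _)
      (mul_nonneg (Finset.prod_nonneg fun i _ => hind_nonneg _ _) (h_nonneg m _))
  have hY_le : ∀ m ω, Y m ω ≤ B m (X m ω) := by
    intro m ω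
    have h2 : (∏ i ∈ Finset.univ.filter (fun i : Fin (k + 1) => t i < m),
        Set.indicator (O i) (fun _ => (1 : ℝ)) (X (t i) ω)) * B m (X m ω) ≤ B m (X m ω) :=
      mul_le_of_le_one_left (h_nonneg m _)
        (Finset.prod_le_one (fun i _ => hind_nonneg _ _) (fun i _ => hind_le_one _ _))
    refine le_trans (mul_le_of_le_one_left ?_ ?_) h2
    · exact mul_nonneg (Finset.prod_nonneg fun i _ => hind_nonneg _ _) (h_nonneg m _)
    · exact Finset.prod_le_one (fun i _ => hind_nonneg _ _) (fun i _ => hind_le_one _ _)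
  -- measurability of Y m w.r.t. 𝓕 N for m ≤ N
  have hY_meas : ∀ m N : ℕ, m ≤ N → Measurable[𝓕 N] (Y m) := by
    intro m N hmN
    refine Measurable.mul ?_ (Measurable.mul ?_ ?_)
    · exact Finset.measurable_prod _ fun i hi =>
        (measurable_const.indicator hU.compl).comp
          (hle (le_trans (Finset.mem_range.mp hi).le hmN))
    · exact Finset.measurable_prod _ fun i hi =>
        (measurable_const.indicator (hO i)).comp
          (hle (le_trans (Nat.le_of_lt_succ (Nat.lt_succ_of_lt (Finset.mem_filter.mp hi).2)) hmN))
    · exact (hB_meas m).comp (hle hmN)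
  have hY_int : ∀ m, Integrable (Y m) ℙ := by
    intro m
    obtain ⟨C, hC⟩ := hB_bdd m
    refine Integrable.mono' (integrable_const C)
      (((hY_meas m m le_rfl).mono (𝓕.le m) le_rfl).aestronglyMeasurable)
      (Filter.Eventually.of_forall fun ω => ?_)
    rw [Real.norm_eq_abs, abs_of_nonneg (hY_nonneg m ω)]
    exact le_trans (hY_le m ω) (le_trans (le_abs_self _) (hC _))
  -- the 𝓕 n-measurable factor of Y (n+1)
  set F : Ω → ℝ := fun ω =>
    (∏ i ∈ Finset.range (n + 1), Set.indicator Uᶜ (fun _ => (1 : ℝ)) (X i ω)) *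
      ∏ i ∈ Finset.univ.filter (fun i : Fin (k + 1) => t i < n + 1),
        Set.indicator (O i) (fun _ => (1 : ℝ)) (X (t i) ω) with hFdef
  set g : Ω → ℝ := fun ω => B (n + 1) (X (n + 1) ω) with hgdef
  have hYn1_eq : Y (n + 1) = F * g := by
    funext ω
    simp only [hYdef, hFdef, hgdef, Yproc, Pi.mul_apply]
    ring
  have hF_meas : Measurable[𝓕 n] F := by
    refine Measurable.mul ?_ ?_
    · exact Finset.measurable_prod _ fun i hi =>
        (measurable_const.indicator hU.compl).comp
          (hle (Nat.lt_succ_iff.mp (Finset.mem_range.mp hi)))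
    · exact Finset.measurable_prod _ fun i hi =>
        (measurable_const.indicator (hO i)).comp
          (hle (Nat.lt_succ_iff.mp (Finset.mem_filter.mp hi).2))
  have hF_nonneg : ∀ ω, 0 ≤ F ω :=
    fun ω => mul_nonneg (Finset.prod_nonneg fun i _ => hind_nonneg _ _)
      (Finset.prod_nonneg fun i _ => hind_nonneg _ _)
  have hF_le_one : ∀ ω, F ω ≤ 1 := by
    intro ω
    exact mul_le_one₀
      (Finset.prod_le_one (fun i _ => hind_nonneg _ _) (fun i _ => hind_le_one _ _))
      (Finset.prod_nonneg fun i _ => hind_nonneg _ _)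
      (Finset.prod_le_one (fun i _ => hind_nonneg _ _) (fun i _ => hind_le_one _ _))
  have hg_int : Integrable g ℙ := by
    obtain ⟨C, hC⟩ := hB_bdd (n + 1)
    refine Integrable.mono' (integrable_const C)
      (((hB_meas (n + 1)).comp ((hX_adapted (n + 1)).mono (𝓕.le (n + 1)) le_rfl)).aestronglyMeasurable)
      (Filter.Eventually.of_forall fun ω => hC _)
  have hcond_mul : ℙ[Y (n + 1)|𝓕 n] =ᵐ[ℙ] F * ℙ[g|𝓕 n] := by
    rw [hYn1_eq]
    exact condExp_stronglyMeasurable_mul_of_bound (𝓕.le n) hF_meas.stronglyMeasurable hg_int 1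
      (Filter.Eventually.of_forall fun ω => by
        rw [Real.norm_eq_abs, abs_of_nonneg (hF_nonneg ω)]
        exact hF_le_one ω)
  -- the stopped-part W
  set W : Ω → ℝ := fun ω => ∑ m ∈ Finset.range (n + 1),
      Set.indicator {ω' | X m ω' ∈ U ∧ ∀ i < m, X i ω' ∉ U} (Y m) ω with hWdef
  have hsetm : ∀ m, m ≤ n → MeasurableSet[𝓕 n] {ω' | X m ω' ∈ U ∧ ∀ i < m, X i ω' ∉ U} := by
    intro m hm
    have hrw : {ω' | X m ω' ∈ U ∧ ∀ i < m, X i ω' ∉ U}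
        = (X m ⁻¹' U) ∩ ⋂ i ∈ Finset.range m, (X i ⁻¹' U)ᶜ := by
      ext ω
      simp [Finset.mem_range]
    rw [hrw]
    exact (hle hm hU).inter ((Finset.range m).measurableSet_biInter fun i hi =>
      (hle (le_trans (Finset.mem_range.mp hi).le hm) hU).compl)
  have hW_meas : Measurable[𝓕 n] W := by
    refine Finset.measurable_sum _ fun m hm => ?_
    exact (hY_meas m n (Nat.lt_succ_iff.mp (Finset.mem_range.mp hm))).indicator
      (hsetm m (Nat.lt_succ_iff.mp (Finset.mem_range.mp hm)))
  have hW_int : Integrable W ℙ := by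
    refine integrable_finset_sum _ fun m hm => ?_
    exact (hY_int m).indicator (𝓕.le n _ (hsetm m (Nat.lt_succ_iff.mp (Finset.mem_range.mp hm))))
  have hW_A : ∀ ω, (∀ i ≤ n, X i ω ∉ U) → W ω = 0 := by
    intro ω hω
    refine Finset.sum_eq_zero fun m hm => ?_
    refine Set.indicator_of_notMem ?_ _
    rintro ⟨hXm, -⟩
    exact hω m (Nat.lt_succ_iff.mp (Finset.mem_range.mp hm)) hXm
  have hW_Ac : ∀ ω, ¬ (∀ i ≤ n, X i ω ∉ U) → W ω = Y ((min (↑n) (τ ω)).toNat) ω := by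
    intro ω hω
    have hτle : τ ω ≤ (n : ℕ∞) := by
      by_contra h'
      exact hω ((hA_iff ω).mp (not_le.mp h'))
    set m₀ : ℕ := (τ ω).toNat with hm₀
    have hτne : τ ω ≠ ⊤ := ne_top_of_le_ne_top (by simp) hτle
    have hτeq : τ ω = (m₀ : ℕ∞) := (ENat.coe_toNat hτne).symm
    have hm₀n : m₀ ≤ n := by
      rw [hτeq] at hτle
      exact_mod_cast hτle
    have hprop : X m₀ ω ∈ U ∧ ∀ i < m₀, X i ω ∉ U := by
      rw [hτdef] at hτeq
      exact (hitTime_eq_coe_iff X U ω m₀).mp hτeq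
    have hmin : (min (↑n) (τ ω)).toNat = m₀ := by
      rw [min_eq_right hτle]
    rw [hmin]
    simp only [hWdef]
    have huniq : ∀ m ∈ Finset.range (n + 1), m ≠ m₀ →
        Set.indicator {ω' | X m ω' ∈ U ∧ ∀ i < m, X i ω' ∉ U} (Y m) ω = 0 := by
      intro m _ hne
      refine Set.indicator_of_notMem ?_ _
      intro hmem
      have : hitTime X U ω = (m : ℕ∞) := (hitTime_eq_coe_iff X U ω m).mpr hmem
      rw [← hτdef, hτeq] at this
      exact hne (by exact_mod_cast this.symm)
    exact (Finset.sum_eq_single_of_mem m₀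
      (Finset.mem_range.mpr (Nat.lt_succ_of_le hm₀n)) huniq).trans
      (Set.indicator_of_mem (show ω ∈ {ω' | X m₀ ω' ∈ U ∧ ∀ i < m₀, X i ω' ∉ U} from hprop) (Y m₀))
  -- Y (n+1) vanishes off A
  have hY_zero : ∀ ω, ¬ (∀ i ≤ n, X i ω ∉ U) → Y (n + 1) ω = 0 := by
    intro ω hω
    push_neg at hω
    obtain ⟨i, hin, hXi⟩ := hω
    have : (∏ j ∈ Finset.range (n + 1), Set.indicator Uᶜ (fun _ => (1 : ℝ)) (X j ω)) = 0 :=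
      Finset.prod_eq_zero (Finset.mem_range.mpr (Nat.lt_succ_of_le hin))
        (Set.indicator_of_notMem (by simpa using hXi) _)
    simp only [hYdef, Yproc]
    rw [this, zero_mul]
  -- decomposition of the stopped process at time n+1
  have hZ_split : (fun ω' => Y ((min (↑(n + 1)) (τ ω')).toNat) ω') = W + Y (n + 1) := by
    funext ω
    by_cases hω : ∀ i ≤ n, X i ω ∉ U
    · rw [Pi.add_apply, hW_A ω hω, hmin_n1 ω hω, zero_add]
    · rw [Pi.add_apply, hW_Ac ω hω, hY_zero ω hω, add_zero, hmin_stop ω hω]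
  -- conditional expectation computation
  have hchain : ℙ[fun ω' => Y ((min (↑(n + 1)) (τ ω')).toNat) ω'|𝓕 n]
      =ᵐ[ℙ] W + F * ℙ[g|𝓕 n] := by
    calc ℙ[fun ω' => Y ((min (↑(n + 1)) (τ ω')).toNat) ω'|𝓕 n]
        = ℙ[W + Y (n + 1)|𝓕 n] := by rw [hZ_split]
      _ =ᵐ[ℙ] ℙ[W|𝓕 n] + ℙ[Y (n + 1)|𝓕 n] := condExp_add hW_int (hY_int (n + 1)) _
      _ =ᵐ[ℙ] W + F * ℙ[g|𝓕 n] := by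
          rw [condExp_of_stronglyMeasurable (𝓕.le n) hW_meas.stronglyMeasurable hW_int]
          exact Filter.EventuallyEq.add Filter.EventuallyEq.rfl hcond_mul
  -- the drift condition, unified
  have hdrift : ∀ᵐ ω ∂ℙ, (X n ω ∉ U ∧ ∀ i, t i = n → X n ω ∈ O i) →
      (ℙ[g|𝓕 n]) ω ≤ B n (X n ω) := by
    rcases le_or_gt n (t (Fin.last k)) with hcase | hcase
    · exact h_drift₁ n hcase
    · filter_upwards [h_drift₂ n hcase] with ω h hyp
      exact h hyp.1
  have hG_nonneg : ∀ᵐ ω ∂ℙ, 0 ≤ (ℙ[g|𝓕 n]) ω :=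
    condExp_nonneg (Filter.Eventually.of_forall fun ω => h_nonneg (n + 1) _)
  -- finish
  filter_upwards [hchain, hdrift, hG_nonneg] with ω heq hdr hGnn
  rw [heq]
  by_cases hω : ∀ i ≤ n, X i ω ∉ U
  · -- on A
    rw [Pi.add_apply, Pi.mul_apply, hW_A ω hω, zero_add, hmin_n ω hω]
    -- goal : F ω * G ω ≤ Y n ω
    by_cases hF0 : F ω = 0
    · rw [hF0, zero_mul]
      exact hY_nonneg n ω
    · -- all indicator factors of F at ω are nonzero
      have hmemU : ∀ i ≤ n, X i ω ∈ Uᶜ := fun i hi => hω i hi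
      have hmemO : ∀ i : Fin (k + 1), t i ≤ n → X (t i) ω ∈ O i := by
        intro i hti
        by_contra hc
        refine hF0 ?_
        have : (∏ j ∈ Finset.univ.filter (fun j : Fin (k + 1) => t j < n + 1),
            Set.indicator (O j) (fun _ => (1 : ℝ)) (X (t j) ω)) = 0 :=
          Finset.prod_eq_zero (Finset.mem_filter.mpr ⟨Finset.mem_univ i, Nat.lt_succ_of_le hti⟩)
            (Set.indicator_of_notMem hc _)
        rw [hFdef]
        simp only []
        rw [this, mul_zero]
      have hF1 : F ω = 1 := by
        rw [hFdef]
        simp only []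
        rw [Finset.prod_eq_one fun i hi =>
            Set.indicator_of_mem (hmemU i (Nat.lt_succ_iff.mp (Finset.mem_range.mp hi))) _,
          Finset.prod_eq_one fun i hi =>
            Set.indicator_of_mem (hmemO i (Nat.lt_succ_iff.mp (Finset.mem_filter.mp hi).2)) _,
          one_mul]
      have hYn_eq : Y n ω = B n (X n ω) := by
        simp only [hYdef, Yproc]
        rw [Finset.prod_eq_one fun i hi =>
            Set.indicator_of_mem (hmemU i (Finset.mem_range.mp hi).le) _,
          Finset.prod_eq_one fun i hi =>
            Set.indicator_of_mem (hmemO i (Finset.mem_filter.mp hi).2.le) _,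
          one_mul, one_mul]
      rw [hF1, one_mul, hYn_eq]
      exact hdr ⟨hω n le_rfl, fun i hti => by
        have := hmemO i (le_of_eq hti)
        rwa [hti] at this⟩
  · -- off A
    rw [Pi.add_apply, Pi.mul_apply, hW_Ac ω hω]
    have hF0 : F ω = 0 := by
      push_neg at hω
      obtain ⟨i, hin, hXi⟩ := hω
      have : (∏ j ∈ Finset.range (n + 1), Set.indicator Uᶜ (fun _ => (1 : ℝ)) (X j ω)) = 0 :=
        Finset.prod_eq_zero (Finset.mem_range.mpr (Nat.lt_succ_of_le hin))
          (Set.indicator_of_notMem (by simpa using hXi) _)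
      rw [hFdef]
      simp only []
      rw [this, zero_mul]
    rw [hF0, zero_mul, add_zero]
end

section
/- Suppose B is an observation-safety barrier function (OSBF) with level p, and let τ := inf{n ∈ ℕ : X_n ∈ U}. Then for every N ∈ ℕ, ℙ(τ ≤ N and X_{t_i} ∈ O_i for every i ∈ {1,…,k} with t_i < τ) ≤ p. -/
open MeasureTheory

open scoped Classical

/-- Auxiliary stopped process: `B` evaluated along `X`, frozen as soon as the trajectory
violates the guard condition (enters `U` or misses an observation). -/
noncomputable def osbfY {Ω 𝒳 : Type*} {k : ℕ} (B : ℕ → 𝒳 → ℝ) (X : ℕ → Ω → 𝒳)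
    (U : Set 𝒳) (t : Fin (k + 1) → ℕ) (O : Fin (k + 1) → Set 𝒳) : ℕ → Ω → ℝ
  | 0 => fun ω => B 0 (X 0 ω)
  | n + 1 => fun ω =>
      if ∀ m ≤ n, X m ω ∉ U ∧ ∀ i, t i = m → X m ω ∈ O i
      then B (n + 1) (X (n + 1) ω) else osbfY B X U t O n ω

/-- If `B` is an OSBF with level `p` and `τ = inf {n | X_n ∈ U}`, then for every
`N`, `ℙ(τ ≤ N and X_{t_i} ∈ O_i for every i with t_i < τ) ≤ p`. -/
theorem osbf_bounded_time_safety_guarantee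
    {Ω : Type*} {m0 : MeasurableSpace Ω} (ℙ : Measure Ω) [IsProbabilityMeasure ℙ]
    (𝓕 : Filtration ℕ m0)
    {𝒳 : Type*} [MeasurableSpace 𝒳]
    (X : ℕ → Ω → 𝒳) (hX_adapted : ∀ n, Measurable[𝓕 n] (X n))
    (x₀ : 𝒳) (hX0 : ∀ᵐ ω ∂ℙ, X 0 ω = x₀)
    (U : Set 𝒳) (hU : MeasurableSet U)
    (k : ℕ) (t : Fin (k + 1) → ℕ) (ht : StrictMono t)
    (O : Fin (k + 1) → Set 𝒳) (hO : ∀ i, MeasurableSet (O i))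
    (B : ℕ → 𝒳 → ℝ)
    (hB_meas : ∀ n, Measurable (B n))
    (hB_bdd : ∀ n, ∃ C : ℝ, ∀ x, |B n x| ≤ C)
    (p : ℝ)
    -- (i) nonnegativity
    (h_nonneg : ∀ n, ∀ x : 𝒳, 0 ≤ B n x)
    -- (ii) initial condition
    (h_init : B 0 x₀ ≤ p)
    -- (iii) barrier at least 1 on the unsafe set
    (h_unsafe : ∀ n, ∀ x ∈ U, 1 ≤ B n x)
    -- (iv) supermartingale (drift) condition on the guard set `G n`, for `n ≤ t_k`
    (h_drift₁ : ∀ n ≤ t (Fin.last k), ∀ᵐ ω ∂ℙ,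
      (X n ω ∉ U ∧ ∀ i, t i = n → X n ω ∈ O i) →
        (ℙ[fun ω' => B (n + 1) (X (n + 1) ω') | 𝓕 n]) ω ≤ B n (X n ω))
    -- (v) supermartingale (drift) condition outside `U`, for `n > t_k`
    (h_drift₂ : ∀ n, t (Fin.last k) < n → ∀ᵐ ω ∂ℙ,
      X n ω ∉ U → (ℙ[fun ω' => B (n + 1) (X (n + 1) ω') | 𝓕 n]) ω ≤ B n (X n ω)) :
    ∀ N : ℕ,
      ℙ {ω | hitTime X U ω ≤ (N : ℕ∞) ∧
          ∀ i, (t i : ℕ∞) < hitTime X U ω → X (t i) ω ∈ O i} ≤ ENNReal.ofReal p := by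
  classical
  set Y : ℕ → Ω → ℝ := osbfY B X U t O with hY
  -- the "good at time m" predicate and sets
  set G : ℕ → Ω → Prop := fun m ω => X m ω ∉ U ∧ ∀ i, t i = m → X m ω ∈ O i with hG
  set A : ℕ → Set Ω := fun n => {ω | ∀ m ≤ n, G m ω} with hA
  have hYsucc : ∀ n ω, Y (n + 1) ω = if ω ∈ A n then B (n + 1) (X (n + 1) ω) else Y n ω := by
    intro n ω
    simp only [hY, osbfY, hA, hG, Set.mem_setOf_eq]
  -- measurability of the good sets
  have hGset : ∀ m, MeasurableSet[𝓕 m] {ω | G m ω} := by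
    intro m
    have hS : MeasurableSet (Uᶜ ∩ ⋂ i, {x | t i = m → x ∈ O i}) := by
      refine hU.compl.inter (MeasurableSet.iInter fun i => ?_)
      by_cases hi : t i = m
      · simpa [hi] using (hO i)
      · simp [hi]
    have : {ω | G m ω} = X m ⁻¹' (Uᶜ ∩ ⋂ i, {x | t i = m → x ∈ O i}) := by
      ext ω
      simp [hG, Set.mem_iInter]
    rw [this]
    exact hX_adapted m hS
  have hAset : ∀ n, MeasurableSet[𝓕 n] (A n) := by
    intro n
    have : A n = ⋂ m, ⋂ _ : m ≤ n, {ω | G m ω} := by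
      ext ω; simp [hA, Set.mem_iInter]
    rw [this]
    exact MeasurableSet.iInter fun m => MeasurableSet.iInter fun hm =>
      𝓕.mono hm _ (hGset m)
  -- measurability of Y
  have hYmeas : ∀ n, Measurable[𝓕 n] (Y n) := by
    intro n
    induction n with
    | zero => exact (hB_meas 0).comp (hX_adapted 0)
    | succ n ih =>
      have h1 : Measurable[𝓕 (n + 1)] fun ω => B (n + 1) (X (n + 1) ω) :=
        (hB_meas (n + 1)).comp (hX_adapted (n + 1))
      have h2 : Measurable[𝓕 (n + 1)] (Y n) := ih.mono (𝓕.mono (Nat.le_succ n)) le_rfl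
      have hAs : MeasurableSet[𝓕 (n + 1)] (A n) := 𝓕.mono (Nat.le_succ n) _ (hAset n)
      have heq : Y (n + 1) = fun ω =>
          if ω ∈ A n then B (n + 1) (X (n + 1) ω) else Y n ω := funext fun ω => hYsucc n ω
      rw [heq]
      exact Measurable.ite hAs h1 h2
  have hYmeas0 : ∀ n, Measurable (Y n) := fun n => (hYmeas n).mono (𝓕.le n) le_rfl
  -- nonnegativity of Y
  have hYnonneg : ∀ n ω, 0 ≤ Y n ω := by
    intro n
    induction n with
    | zero => intro ω; exact h_nonneg 0 _
    | succ n ih =>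
      intro ω
      rw [hYsucc n ω]
      by_cases hω : ω ∈ A n
      · simpa [hω] using h_nonneg (n + 1) _
      · simpa [hω] using ih ω
  -- boundedness and integrability of Y
  have hYbdd : ∀ n, ∃ C : ℝ, ∀ ω, |Y n ω| ≤ C := by
    intro n
    induction n with
    | zero => obtain ⟨C, hC⟩ := hB_bdd 0; exact ⟨C, fun ω => hC _⟩
    | succ n ih =>
      obtain ⟨C1, hC1⟩ := hB_bdd (n + 1)
      obtain ⟨C2, hC2⟩ := ih
      refine ⟨max C1 C2, fun ω => ?_⟩
      rw [hYsucc n ω]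
      by_cases hω : ω ∈ A n
      · simp only [hω, if_true]; exact le_max_of_le_left (hC1 _)
      · simp only [hω, if_false]; exact le_max_of_le_right (hC2 ω)
  have hYint : ∀ n, Integrable (Y n) ℙ := by
    intro n
    obtain ⟨C, hC⟩ := hYbdd n
    exact (integrable_const C).mono' (hYmeas0 n).aestronglyMeasurable
      (Filter.Eventually.of_forall fun ω => by simpa [Real.norm_eq_abs] using hC ω)
  -- Y n equals B n (X n) on trajectories good before time n
  have hYeq : ∀ n ω, (∀ m < n, G m ω) → Y n ω = B n (X n ω) := by
    intro n
    induction n with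
    | zero => intro ω _; rfl
    | succ n ih =>
      intro ω hω
      rw [hYsucc n ω]
      exact if_pos (show ω ∈ A n from fun m hm => hω m (Nat.lt_succ_of_le hm))
  -- the one-step supermartingale inequality
  have hstep : ∀ n, ∫ ω, Y (n + 1) ω ∂ℙ ≤ ∫ ω, Y n ω ∂ℙ := by
    intro n
    set f : Ω → ℝ := fun ω => B (n + 1) (X (n + 1) ω) with hf
    have hfmeas : Measurable f := (hB_meas (n + 1)).comp
      ((hX_adapted (n + 1)).mono (𝓕.le (n + 1)) le_rfl)
    have hfint : Integrable f ℙ := by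
      obtain ⟨C, hC⟩ := hB_bdd (n + 1)
      exact (integrable_const C).mono' hfmeas.aestronglyMeasurable
        (Filter.Eventually.of_forall fun ω => by simpa [Real.norm_eq_abs] using hC _)
    have hAm0 : MeasurableSet (A n) := 𝓕.le n _ (hAset n)
    have hdec : Y (n + 1) = (A n).indicator f + (A n)ᶜ.indicator (Y n) := by
      funext ω
      rw [hYsucc n ω]
      by_cases hω : ω ∈ A n
      · simp [hω]; rfl
      · simp [hω]
    have hind1 : Integrable ((A n).indicator f) ℙ := hfint.indicator hAm0
    have hind2 : Integrable ((A n)ᶜ.indicator (Y n)) ℙ := (hYint n).indicator hAm0.compl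
    have hsm2 : StronglyMeasurable[𝓕 n] ((A n)ᶜ.indicator (Y n)) :=
      ((hYmeas n).indicator (hAset n).compl).stronglyMeasurable
    have hcond : (ℙ[Y (n + 1) | 𝓕 n]) =ᵐ[ℙ]
        (A n).indicator (ℙ[f | 𝓕 n]) + (A n)ᶜ.indicator (Y n) := by
      rw [hdec]
      refine (condExp_add hind1 hind2 _).trans ?_
      have e1 : (ℙ[(A n).indicator f | 𝓕 n]) =ᵐ[ℙ] (A n).indicator (ℙ[f | 𝓕 n]) :=
        condExp_indicator hfint (hAset n)
      have e2 : (ℙ[(A n)ᶜ.indicator (Y n) | 𝓕 n]) = (A n)ᶜ.indicator (Y n) :=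
        condExp_of_stronglyMeasurable (𝓕.le n) hsm2 hind2
      filter_upwards [e1] with ω h1
      simp [Pi.add_apply, h1, e2]
    have hdrift : ∀ᵐ ω ∂ℙ, ω ∈ A n → (ℙ[f | 𝓕 n]) ω ≤ B n (X n ω) := by
      by_cases hn : n ≤ t (Fin.last k)
      · filter_upwards [h_drift₁ n hn] with ω h hω
        exact h ((hω n le_rfl : G n ω))
      · push_neg at hn
        filter_upwards [h_drift₂ n hn] with ω h hω
        exact h (hω n le_rfl).1
    have hle : (ℙ[Y (n + 1) | 𝓕 n]) ≤ᵐ[ℙ] Y n := by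
      filter_upwards [hcond, hdrift] with ω hc hd
      rw [hc]
      by_cases hω : ω ∈ A n
      · have hYn : Y n ω = B n (X n ω) := hYeq n ω fun m hm => hω m hm.le
        simp only [Pi.add_apply, Set.indicator_of_mem hω,
          Set.indicator_of_notMem (by simp [hω] : ω ∉ (A n)ᶜ), add_zero]
        rw [hYn]
        exact hd hω
      · simp [Pi.add_apply, Set.indicator_of_notMem hω,
          Set.indicator_of_mem (Set.mem_compl hω)]
    calc ∫ ω, Y (n + 1) ω ∂ℙ = ∫ ω, (ℙ[Y (n + 1) | 𝓕 n]) ω ∂ℙ :=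
          (integral_condExp (𝓕.le n)).symm
      _ ≤ ∫ ω, Y n ω ∂ℙ := integral_mono_ae integrable_condExp (hYint n) hle
  -- the integral of Y N is at most p
  have hintN : ∀ N, ∫ ω, Y N ω ∂ℙ ≤ p := by
    intro N
    induction N with
    | zero =>
      have : ∫ ω, Y 0 ω ∂ℙ = B 0 x₀ := by
        rw [show (∫ ω, Y 0 ω ∂ℙ) = ∫ _ω, B 0 x₀ ∂ℙ from
          integral_congr_ae (hX0.mono fun ω h => by simp [hY, osbfY, h])]
        simp
      rw [this]; exact h_init
    | succ n ih => exact (hstep n).trans ih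
  -- final argument
  intro N
  have hsub : {ω | hitTime X U ω ≤ (N : ℕ∞) ∧
      ∀ i, (t i : ℕ∞) < hitTime X U ω → X (t i) ω ∈ O i} ⊆ {ω | 1 ≤ Y N ω} := by
    intro ω hω
    obtain ⟨hτN, hobs⟩ := hω
    have hex : ∃ n, X n ω ∈ U := by
      by_contra h
      push_neg at h
      have htop : (⊤ : ℕ∞) ≤ hitTime X U ω :=
        le_iInf fun n => le_iInf fun hn => absurd hn (h n)
      have := htop.trans hτN
      simp at this
    set τ := Nat.find hex with hτ
    have hht : hitTime X U ω = (τ : ℕ∞) := by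
      refine le_antisymm (iInf₂_le τ (Nat.find_spec hex)) ?_
      refine le_iInf fun n => le_iInf fun hn => ?_
      exact_mod_cast Nat.find_min' hex hn
    have hτle : τ ≤ N := by
      rw [hht] at hτN
      exact_mod_cast hτN
    have hgood : ∀ m < τ, G m ω := by
      intro m hm
      refine ⟨Nat.find_min hex hm, fun i hi => ?_⟩
      subst hi
      refine hobs i ?_
      rw [hht]
      exact_mod_cast hm
    have h1 : 1 ≤ Y τ ω := by
      rw [hYeq τ ω hgood]
      exact h_unsafe τ _ (Nat.find_spec hex)
    have hfreeze : ∀ n, τ ≤ n → Y n ω = Y τ ω := by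
      intro n hn
      induction n, hn using Nat.le_induction with
      | base => rfl
      | succ n hn ih =>
        rw [hYsucc n ω, if_neg, ih]
        intro h
        exact (h τ hn).1 (Nat.find_spec hex)
    show 1 ≤ Y N ω
    rw [hfreeze N hτle]
    exact h1
  have hmark : (ℙ {ω | 1 ≤ Y N ω}).toReal ≤ ∫ ω, Y N ω ∂ℙ := by
    have := mul_meas_ge_le_integral_of_nonneg
      (Filter.Eventually.of_forall fun ω => hYnonneg N ω) (hYint N) 1
    simpa [measureReal_def] using this
  calc ℙ {ω | hitTime X U ω ≤ (N : ℕ∞) ∧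
        ∀ i, (t i : ℕ∞) < hitTime X U ω → X (t i) ω ∈ O i}
      ≤ ℙ {ω | 1 ≤ Y N ω} := measure_mono hsub
    _ = ENNReal.ofReal ((ℙ {ω | 1 ≤ Y N ω}).toReal) :=
        (ENNReal.ofReal_toReal (measure_ne_top ℙ _)).symm
    _ ≤ ENNReal.ofReal p := ENNReal.ofReal_le_ofReal (hmark.trans (hintN N))
end

section
/- Suppose B is an observation barrier function (OBF) with level q > 0 and B' is an observation-safety barrier function (OSBF) with level p, both for the same unsafe set U, observation times t_1 < ⋯ < t_k, and observation sets O_1, …, O_k. Let A denote the event {X_{t_i} ∈ O_i for all 1 ≤ i ≤ k, and X_n ∉ U for all n ≤ t_k}. Then the conditional probability of remaining safe forever satisfies ℙ(X_n ∉ U for all n ∈ ℕ | A) ≥ 1 − p/q. -/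
/-!
Let `D n` be the event that the guards `G 0, …, G (n - 1)` held along the path, so that
`D (t_k + 1)` is the conditioning event `A`. Up to time `t_k + 1` the integral of `B n (X n)`
over `D n` cannot decrease: the drift condition makes it grow on `D (n + 1)`, and the part
of `D n` that is cut off lies where `B n ≤ 0`. Hence `q ≤ ℙ(A)` because `B ≤ 1` at the end.
Dually the integral of `B' n (X n)` over `D n` cannot increase, and every path cut off by
entering `U` takes at least `1` with it; so the paths of `A` that ever enter `U` have
probability at most `p`. Therefore `ℙ(safe | A) ≥ (ℙ(A) - p) / ℙ(A) ≥ 1 - p / q`.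
-/

open MeasureTheory Set

section

variable {Ω 𝒳 : Type*}

def guardedUpTo (X : ℕ → Ω → 𝒳) (G : ℕ → Set 𝒳) (n : ℕ) : Set Ω :=
  {ω | ∀ m < n, X m ω ∈ G m}

-- The paper's `G_n`: `Uᶜ ∩ O_i` if `n = t_i`, and `Uᶜ` at times without observation.
def observationGuard {k : ℕ} (U : Set 𝒳) (t : Fin (k + 1) → ℕ) (O : Fin (k + 1) → Set 𝒳)
    (n : ℕ) : Set 𝒳 :=
  {x | x ∉ U ∧ ∀ i, t i = n → x ∈ O i}

section guardedUpTo

variable {X : ℕ → Ω → 𝒳} {G : ℕ → Set 𝒳}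

theorem guardedUpTo_zero : guardedUpTo X G 0 = univ := by
  ext; simp [guardedUpTo]

theorem guardedUpTo_succ (n : ℕ) :
    guardedUpTo X G (n + 1) = guardedUpTo X G n ∩ X n ⁻¹' G n := by
  ext ω
  simp only [guardedUpTo, mem_ofPred_eq, mem_inter_iff, mem_preimage, Nat.lt_succ_iff_lt_or_eq,
    or_imp, forall_and, forall_eq]

theorem measurableSet_guardedUpTo [MeasurableSpace 𝒳] {m : MeasurableSpace Ω} {n : ℕ}
    (hX : ∀ j < n, Measurable[m] (X j)) (hG : ∀ j, MeasurableSet (G j)) :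
    MeasurableSet[m] (guardedUpTo X G n) := by
  induction n with
  | zero => rw [guardedUpTo_zero]; exact .univ
  | succ n ih =>
    rw [guardedUpTo_succ]
    exact (ih fun j hj => hX j (by omega)).inter (hX n n.lt_succ_self (hG n))

end guardedUpTo

section condExp

variable {m m0 : MeasurableSpace Ω} {μ : Measure Ω} {f g : Ω → ℝ} {s : Set Ω}

theorem setIntegral_le_of_ae_le_condExp (hm : m ≤ m0) [SigmaFinite (μ.trim hm)]
    (hs : MeasurableSet[m] s) (hf : IntegrableOn f s μ) (hg : Integrable g μ)
    (h : ∀ᵐ ω ∂μ, ω ∈ s → f ω ≤ μ[g | m] ω) :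
    ∫ ω in s, f ω ∂μ ≤ ∫ ω in s, g ω ∂μ :=
  (setIntegral_mono_on_ae hf integrable_condExp.integrableOn (hm s hs) h).trans_eq
    (setIntegral_condExp hm hg hs)

theorem setIntegral_le_of_condExp_ae_le (hm : m ≤ m0) [SigmaFinite (μ.trim hm)]
    (hs : MeasurableSet[m] s) (hf : Integrable f μ) (hg : IntegrableOn g s μ)
    (h : ∀ᵐ ω ∂μ, ω ∈ s → μ[f | m] ω ≤ g ω) :
    ∫ ω in s, f ω ∂μ ≤ ∫ ω in s, g ω ∂μ :=
  (setIntegral_condExp hm hf hs).symm.trans_le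
    (setIntegral_mono_on_ae integrable_condExp.integrableOn hg (hm s hs) h)

end condExp

section barrier

variable {m0 : MeasurableSpace Ω} [MeasurableSpace 𝒳] {μ : Measure Ω} [IsFiniteMeasure μ]
  {𝓕 : Filtration ℕ m0} {X : ℕ → Ω → 𝒳} {G : ℕ → Set 𝒳}

theorem integrable_comp_of_abs_le {f : 𝒳 → ℝ} {Y : Ω → 𝒳} (hf : Measurable f)
    (hbdd : ∃ C, ∀ x, |f x| ≤ C) (hY : Measurable Y) :
    Integrable (fun ω => f (Y ω)) μ :=
  let ⟨C, hC⟩ := hbdd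
  .of_bound (hf.comp hY).aestronglyMeasurable C (ae_of_all _ fun ω => hC (Y ω))

theorem measurableSet_guardedUpTo_succ (hX : ∀ n, Measurable[𝓕 n] (X n))
    (hG : ∀ n, MeasurableSet (G n)) (n : ℕ) :
    MeasurableSet[𝓕 n] (guardedUpTo X G (n + 1)) :=
  measurableSet_guardedUpTo (fun j hj => (hX j).mono (𝓕.mono (by omega)) le_rfl) hG

theorem setIntegral_guardedUpTo_le_succ (hX : ∀ n, Measurable[𝓕 n] (X n))
    (hG : ∀ n, MeasurableSet (G n)) {B : ℕ → 𝒳 → ℝ} {n : ℕ}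
    (hBn : Integrable (fun ω => B n (X n ω)) μ)
    (hBn' : Integrable (fun ω => B (n + 1) (X (n + 1) ω)) μ)
    (h_drift : ∀ᵐ ω ∂μ, X n ω ∈ G n →
      B n (X n ω) ≤ μ[fun ω' => B (n + 1) (X (n + 1) ω') | 𝓕 n] ω)
    (h_nonpos : ∀ x ∉ G n, B n x ≤ 0) :
    ∫ ω in guardedUpTo X G n, B n (X n ω) ∂μ ≤
      ∫ ω in guardedUpTo X G (n + 1), B (n + 1) (X (n + 1) ω) ∂μ := by
  have hXn : Measurable (X n) := (hX n).mono (𝓕.le n) le_rfl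
  have hloss : ∫ ω in guardedUpTo X G n \ X n ⁻¹' G n, B n (X n ω) ∂μ ≤ 0 :=
    setIntegral_nonpos
      ((measurableSet_guardedUpTo (fun j _ => (hX j).mono (𝓕.le j) le_rfl) hG).diff (hXn (hG n)))
      fun ω hω => h_nonpos _ hω.2
  have hgain : ∫ ω in guardedUpTo X G (n + 1), B n (X n ω) ∂μ ≤
      ∫ ω in guardedUpTo X G (n + 1), B (n + 1) (X (n + 1) ω) ∂μ :=
    setIntegral_le_of_ae_le_condExp (𝓕.le n) (measurableSet_guardedUpTo_succ hX hG n)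
      hBn.integrableOn hBn' (h_drift.mono fun ω h hω => h ((guardedUpTo_succ n ▸ hω).2))
  rw [← integral_inter_add_sdiff (hXn (hG n)) hBn.integrableOn, ← guardedUpTo_succ]
  linarith

theorem measureReal_add_setIntegral_guardedUpTo_succ_le (hX : ∀ n, Measurable[𝓕 n] (X n))
    (hG : ∀ n, MeasurableSet (G n)) {U : Set 𝒳} (hU : MeasurableSet U) {B' : ℕ → 𝒳 → ℝ}
    {n : ℕ} (hGU : G n ⊆ Uᶜ) (hBn : Integrable (fun ω => B' n (X n ω)) μ)
    (hBn' : Integrable (fun ω => B' (n + 1) (X (n + 1) ω)) μ)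
    (h_drift : ∀ᵐ ω ∂μ, X n ω ∈ G n →
      μ[fun ω' => B' (n + 1) (X (n + 1) ω') | 𝓕 n] ω ≤ B' n (X n ω))
    (h_nonneg : ∀ x, 0 ≤ B' n x) (h_unsafe : ∀ x ∈ U, 1 ≤ B' n x) :
    μ.real (guardedUpTo X G n ∩ X n ⁻¹' U) +
        ∫ ω in guardedUpTo X G (n + 1), B' (n + 1) (X (n + 1) ω) ∂μ ≤
      ∫ ω in guardedUpTo X G n, B' n (X n ω) ∂μ := by
  have hXn : Measurable (X n) := (hX n).mono (𝓕.le n) le_rfl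
  have hD : MeasurableSet (guardedUpTo X G n) :=
    measurableSet_guardedUpTo (fun j _ => (hX j).mono (𝓕.le j) le_rfl) hG
  have hsub : guardedUpTo X G n ∩ X n ⁻¹' U ⊆ guardedUpTo X G n \ X n ⁻¹' G n :=
    fun ω hω => ⟨hω.1, fun hGω => hGU hGω hω.2⟩
  have hloss : μ.real (guardedUpTo X G n ∩ X n ⁻¹' U) ≤
      ∫ ω in guardedUpTo X G n \ X n ⁻¹' G n, B' n (X n ω) ∂μ :=
    calc μ.real (guardedUpTo X G n ∩ X n ⁻¹' U)
        = ∫ _ in guardedUpTo X G n ∩ X n ⁻¹' U, (1 : ℝ) ∂μ := by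
          rw [setIntegral_const, smul_eq_mul, mul_one]
      _ ≤ ∫ ω in guardedUpTo X G n ∩ X n ⁻¹' U, B' n (X n ω) ∂μ :=
          setIntegral_mono_on (integrableOn_const (measure_ne_top μ _)) hBn.integrableOn
            (hD.inter (hXn hU)) fun ω hω => h_unsafe _ hω.2
      _ ≤ ∫ ω in guardedUpTo X G n \ X n ⁻¹' G n, B' n (X n ω) ∂μ :=
          setIntegral_mono_set hBn.integrableOn (ae_of_all _ fun ω => h_nonneg _)
            hsub.eventuallyLE
  have hgain : ∫ ω in guardedUpTo X G (n + 1), B' (n + 1) (X (n + 1) ω) ∂μ ≤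
      ∫ ω in guardedUpTo X G (n + 1), B' n (X n ω) ∂μ :=
    setIntegral_le_of_condExp_ae_le (𝓕.le n) (measurableSet_guardedUpTo_succ hX hG n)
      hBn' hBn.integrableOn (h_drift.mono fun ω h hω => h ((guardedUpTo_succ n ▸ hω).2))
  rw [← integral_inter_add_sdiff (hXn (hG n)) hBn.integrableOn, ← guardedUpTo_succ]
  linarith

theorem integral_le_setIntegral_guardedUpTo (hX : ∀ n, Measurable[𝓕 n] (X n))
    (hG : ∀ n, MeasurableSet (G n)) {B : ℕ → 𝒳 → ℝ} {N : ℕ}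
    (hB : ∀ n, Integrable (fun ω => B n (X n ω)) μ)
    (h_drift : ∀ n ≤ N, ∀ᵐ ω ∂μ, X n ω ∈ G n →
      B n (X n ω) ≤ μ[fun ω' => B (n + 1) (X (n + 1) ω') | 𝓕 n] ω)
    (h_nonpos : ∀ n ≤ N, ∀ x ∉ G n, B n x ≤ 0) :
    ∀ n ≤ N + 1, ∫ ω, B 0 (X 0 ω) ∂μ ≤ ∫ ω in guardedUpTo X G n, B n (X n ω) ∂μ
  | 0, _ => by rw [guardedUpTo_zero, Measure.restrict_univ]
  | n + 1, hn =>
    (integral_le_setIntegral_guardedUpTo hX hG hB h_drift h_nonpos n (by omega)).trans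
      (setIntegral_guardedUpTo_le_succ hX hG (hB n) (hB (n + 1)) (h_drift n (by omega))
        (h_nonpos n (by omega)))

theorem integral_le_measureReal_guardedUpTo (hX : ∀ n, Measurable[𝓕 n] (X n))
    (hG : ∀ n, MeasurableSet (G n)) {B : ℕ → 𝒳 → ℝ} {N : ℕ}
    (hB : ∀ n, Integrable (fun ω => B n (X n ω)) μ)
    (h_drift : ∀ n ≤ N, ∀ᵐ ω ∂μ, X n ω ∈ G n →
      B n (X n ω) ≤ μ[fun ω' => B (n + 1) (X (n + 1) ω') | 𝓕 n] ω)
    (h_nonpos : ∀ n ≤ N, ∀ x ∉ G n, B n x ≤ 0) (h_term : ∀ x, B (N + 1) x ≤ 1) :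
    ∫ ω, B 0 (X 0 ω) ∂μ ≤ μ.real (guardedUpTo X G (N + 1)) :=
  calc ∫ ω, B 0 (X 0 ω) ∂μ
      ≤ ∫ ω in guardedUpTo X G (N + 1), B (N + 1) (X (N + 1) ω) ∂μ :=
        integral_le_setIntegral_guardedUpTo hX hG hB h_drift h_nonpos _ le_rfl
    _ ≤ ∫ _ in guardedUpTo X G (N + 1), (1 : ℝ) ∂μ :=
        setIntegral_mono (hB _).integrableOn (integrableOn_const (measure_ne_top μ _))
          fun ω => h_term (X _ ω)
    _ = μ.real (guardedUpTo X G (N + 1)) := by rw [setIntegral_const, smul_eq_mul, mul_one]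

theorem sum_measureReal_add_setIntegral_guardedUpTo_le (hX : ∀ n, Measurable[𝓕 n] (X n))
    (hG : ∀ n, MeasurableSet (G n)) {U : Set 𝒳} (hU : MeasurableSet U) {B' : ℕ → 𝒳 → ℝ}
    (hGU : ∀ n, G n ⊆ Uᶜ) (hB' : ∀ n, Integrable (fun ω => B' n (X n ω)) μ)
    (h_drift : ∀ n, ∀ᵐ ω ∂μ, X n ω ∈ G n →
      μ[fun ω' => B' (n + 1) (X (n + 1) ω') | 𝓕 n] ω ≤ B' n (X n ω))
    (h_nonneg : ∀ n x, 0 ≤ B' n x) (h_unsafe : ∀ n, ∀ x ∈ U, 1 ≤ B' n x) :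
    ∀ n, ∑ m ∈ Finset.range n, μ.real (guardedUpTo X G m ∩ X m ⁻¹' U) +
      ∫ ω in guardedUpTo X G n, B' n (X n ω) ∂μ ≤ ∫ ω, B' 0 (X 0 ω) ∂μ
  | 0 => by rw [Finset.sum_range_zero, zero_add, guardedUpTo_zero, Measure.restrict_univ]
  | n + 1 => by
    have ih :=
      sum_measureReal_add_setIntegral_guardedUpTo_le hX hG hU hGU hB' h_drift h_nonneg h_unsafe n
    have step := measureReal_add_setIntegral_guardedUpTo_succ_le hX hG hU (hGU n) (hB' n)
      (hB' (n + 1)) (h_drift n) (h_nonneg n) (h_unsafe n)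
    rw [Finset.sum_range_succ]
    linarith

theorem measureReal_iUnion_guardedUpTo_inter_le (hX : ∀ n, Measurable[𝓕 n] (X n))
    (hG : ∀ n, MeasurableSet (G n)) {U : Set 𝒳} (hU : MeasurableSet U) {B' : ℕ → 𝒳 → ℝ}
    (hGU : ∀ n, G n ⊆ Uᶜ) (hB' : ∀ n, Integrable (fun ω => B' n (X n ω)) μ)
    (h_drift : ∀ n, ∀ᵐ ω ∂μ, X n ω ∈ G n →
      μ[fun ω' => B' (n + 1) (X (n + 1) ω') | 𝓕 n] ω ≤ B' n (X n ω))
    (h_nonneg : ∀ n x, 0 ≤ B' n x) (h_unsafe : ∀ n, ∀ x ∈ U, 1 ≤ B' n x) :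
    μ.real (⋃ m, guardedUpTo X G m ∩ X m ⁻¹' U) ≤ ∫ ω, B' 0 (X 0 ω) ∂μ := by
  have hc : 0 ≤ ∫ ω, B' 0 (X 0 ω) ∂μ := integral_nonneg fun ω => h_nonneg 0 _
  refine ENNReal.toReal_le_of_le_ofReal hc
    ((measure_iUnion_le _).trans (ENNReal.tsum_le_of_sum_range_le fun n => ?_))
  rw [ENNReal.le_ofReal_iff_toReal_le (ENNReal.sum_ne_top.2 fun m _ => measure_ne_top μ _) hc,
    ENNReal.toReal_sum fun m _ => measure_ne_top μ _]
  have hsum :=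
    sum_measureReal_add_setIntegral_guardedUpTo_le hX hG hU hGU hB' h_drift h_nonneg h_unsafe n
  have hrest : 0 ≤ ∫ ω in guardedUpTo X G n, B' n (X n ω) ∂μ :=
    integral_nonneg fun ω => h_nonneg n _
  exact le_of_add_le_of_nonneg_left hsum hrest

end barrier

section observation

variable {k : ℕ} {U : Set 𝒳} {t : Fin (k + 1) → ℕ} {O : Fin (k + 1) → Set 𝒳}

theorem measurableSet_observationGuard [MeasurableSpace 𝒳] (hU : MeasurableSet U)
    (hO : ∀ i, MeasurableSet (O i)) (n : ℕ) : MeasurableSet (observationGuard U t O n) := by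
  unfold observationGuard
  measurability

theorem guardedUpTo_observationGuard {X : ℕ → Ω → 𝒳} (ht : Monotone t) :
    guardedUpTo X (observationGuard U t O) (t (Fin.last k) + 1) =
      {ω | (∀ i, X (t i) ω ∈ O i) ∧ ∀ n ≤ t (Fin.last k), X n ω ∉ U} := by
  ext ω
  simp only [guardedUpTo, observationGuard, mem_ofPred_eq, Nat.lt_succ_iff]
  constructor
  · intro h
    exact ⟨fun i => (h (t i) (ht (Fin.le_last i))).2 i rfl, fun n hn => (h n hn).1⟩
  · rintro ⟨hobs, hsafe⟩ n hn
    exact ⟨hsafe n hn, fun i hi => hi ▸ hobs i⟩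

theorem guardedUpTo_observationGuard_sdiff_subset {X : ℕ → Ω → 𝒳} (ht : Monotone t) :
    guardedUpTo X (observationGuard U t O) (t (Fin.last k) + 1) \ {ω | ∀ n, X n ω ∉ U} ⊆
      ⋃ m, guardedUpTo X (observationGuard U t O) m ∩ X m ⁻¹' U := by
  classical
  rintro ω ⟨hA, hS⟩
  rw [guardedUpTo_observationGuard ht] at hA
  replace hS : ∃ n, X n ω ∈ U := by simpa using hS
  exact mem_iUnion.2 ⟨Nat.find hS,
    fun j hj => ⟨Nat.find_min hS hj, fun i hi => hi ▸ hA.1 i⟩, Nat.find_spec hS⟩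

end observation

theorem ofReal_one_sub_div_le_cond {m0 : MeasurableSpace Ω} {μ : Measure Ω} [IsFiniteMeasure μ]
    {s t : Set Ω} (hs : MeasurableSet s) {p q : ℝ} (hq : 0 < q) (hqs : q ≤ μ.real s)
    (hp : μ.real (s \ t) ≤ p) :
    ENNReal.ofReal (1 - p / q) ≤ ProbabilityTheory.cond μ s t := by
  have hs_pos : 0 < μ.real s := hq.trans_le hqs
  have hp_nonneg : 0 ≤ p := measureReal_nonneg.trans hp
  have hst : μ.real s - p ≤ μ.real (s ∩ t) := by
    have := measureReal_union_le (μ := μ) (s ∩ t) (s \ t)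
    rw [inter_union_sdiff] at this
    linarith
  rw [ENNReal.ofReal_le_iff_le_toReal (measure_ne_top _ _), ProbabilityTheory.cond_apply hs,
    ENNReal.toReal_mul, ENNReal.toReal_inv]
  calc 1 - p / q ≤ 1 - p / μ.real s := by gcongr
    _ = (μ.real s - p) / μ.real s := by field_simp
    _ ≤ μ.real (s ∩ t) / μ.real s := by gcongr
    _ = (μ.real s)⁻¹ * μ.real (s ∩ t) := by rw [div_eq_inv_mul]

end

/-- If `B` is an OBF with level `q > 0` and `B'` is an OSBF with level `p` (for the
same unsafe set, observation times and observation sets), and `A` is the event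
`{X_{t_i} ∈ O_i for all i and X_n ∉ U for all n ≤ t_k}`, then
`ℙ(X_n ∉ U for all n | A) ≥ 1 − p/q`. -/
theorem conditional_safety_guarantee
    {Ω : Type*} {m0 : MeasurableSpace Ω} (ℙ : Measure Ω) [IsProbabilityMeasure ℙ]
    (𝓕 : Filtration ℕ m0)
    {𝒳 : Type*} [MeasurableSpace 𝒳]
    (X : ℕ → Ω → 𝒳) (hX_adapted : ∀ n, Measurable[𝓕 n] (X n))
    (x₀ : 𝒳) (hX0 : ∀ᵐ ω ∂ℙ, X 0 ω = x₀)
    (U : Set 𝒳) (hU : MeasurableSet U)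
    (k : ℕ) (t : Fin (k + 1) → ℕ) (ht : StrictMono t)
    (O : Fin (k + 1) → Set 𝒳) (hO : ∀ i, MeasurableSet (O i))
    (B B' : ℕ → 𝒳 → ℝ)
    (hB_meas : ∀ n, Measurable (B n)) (hB'_meas : ∀ n, Measurable (B' n))
    (hB_bdd : ∀ n, ∃ C : ℝ, ∀ x, |B n x| ≤ C)
    (hB'_bdd : ∀ n, ∃ C : ℝ, ∀ x, |B' n x| ≤ C)
    (q p : ℝ) (hq : 0 < q)
    -- `B` is an OBF with level `q`:
    (h_init : q ≤ B 0 x₀)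
    (h_drift : ∀ n ≤ t (Fin.last k), ∀ᵐ ω ∂ℙ,
      (X n ω ∉ U ∧ ∀ i, t i = n → X n ω ∈ O i) →
        B n (X n ω) ≤ (ℙ[fun ω' => B (n + 1) (X (n + 1) ω') | 𝓕 n]) ω)
    (h_nonpos : ∀ n ≤ t (Fin.last k), ∀ x : 𝒳,
      ¬(x ∉ U ∧ ∀ i, t i = n → x ∈ O i) → B n x ≤ 0)
    (h_term : ∀ x : 𝒳, B (t (Fin.last k) + 1) x ≤ 1)
    -- `B'` is an OSBF with level `p`:
    (h'_nonneg : ∀ n, ∀ x : 𝒳, 0 ≤ B' n x)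
    (h'_init : B' 0 x₀ ≤ p)
    (h'_unsafe : ∀ n, ∀ x ∈ U, 1 ≤ B' n x)
    (h'_drift₁ : ∀ n ≤ t (Fin.last k), ∀ᵐ ω ∂ℙ,
      (X n ω ∉ U ∧ ∀ i, t i = n → X n ω ∈ O i) →
        (ℙ[fun ω' => B' (n + 1) (X (n + 1) ω') | 𝓕 n]) ω ≤ B' n (X n ω))
    (h'_drift₂ : ∀ n, t (Fin.last k) < n → ∀ᵐ ω ∂ℙ,
      X n ω ∉ U → (ℙ[fun ω' => B' (n + 1) (X (n + 1) ω') | 𝓕 n]) ω ≤ B' n (X n ω)) :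
    ENNReal.ofReal (1 - p / q) ≤
      ProbabilityTheory.cond ℙ
        {ω | (∀ i, X (t i) ω ∈ O i) ∧ ∀ n ≤ t (Fin.last k), X n ω ∉ U}
        {ω | ∀ n, X n ω ∉ U} := by
  set G := observationGuard U t O
  have hX : ∀ n, Measurable (X n) := fun n => (hX_adapted n).mono (𝓕.le n) le_rfl
  have hG : ∀ n, MeasurableSet (G n) := measurableSet_observationGuard hU hO
  have hBi n := integrable_comp_of_abs_le (μ := ℙ) (hB_meas n) (hB_bdd n) (hX n)
  have hB'i n := integrable_comp_of_abs_le (μ := ℙ) (hB'_meas n) (hB'_bdd n) (hX n)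
  have h_start (f : 𝒳 → ℝ) : ∫ ω, f (X 0 ω) ∂ℙ = f x₀ := by
    rw [integral_congr_ae (hX0.mono fun ω h => congrArg f h), integral_const, probReal_univ,
      one_smul]
  have h'_drift n : ∀ᵐ ω ∂ℙ, X n ω ∈ G n →
      ℙ[fun ω' => B' (n + 1) (X (n + 1) ω') | 𝓕 n] ω ≤ B' n (X n ω) := by
    rcases le_or_gt n (t (Fin.last k)) with hn | hn
    · exact h'_drift₁ n hn
    · filter_upwards [h'_drift₂ n hn] with ω h hGω using h hGω.1
  rw [← guardedUpTo_observationGuard ht.monotone]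
  refine ofReal_one_sub_div_le_cond (measurableSet_guardedUpTo (fun j _ => hX j) hG) hq ?_ ?_
  · calc q ≤ ∫ ω, B 0 (X 0 ω) ∂ℙ := h_start (B 0) ▸ h_init
      _ ≤ _ := integral_le_measureReal_guardedUpTo hX_adapted hG hBi h_drift h_nonpos h_term
  · calc _ ≤ ℙ.real (⋃ m, guardedUpTo X G m ∩ X m ⁻¹' U) :=
          measureReal_mono (guardedUpTo_observationGuard_sdiff_subset ht.monotone)
      _ ≤ ∫ ω, B' 0 (X 0 ω) ∂ℙ :=
        measureReal_iUnion_guardedUpTo_inter_le hX_adapted hG hU (fun n x hx => hx.1) hB'i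
          h'_drift h'_nonneg h'_unsafe
      _ ≤ p := h_start (B' 0) ▸ h'_init
end

section
/- Suppose B is an observation reach-avoid barrier function (ORBF) with level p for the target set T. Then ℙ(RA(T, U) and X_{t_i} ∈ O_i for all 1 ≤ i ≤ k) ≤ p, where RA(T, U) is the event {∃ n ∈ ℕ, X_n ∈ U and X_m ∉ U ∪ T for all m < n} (the process reaches the unsafe set U before reaching the target set T). -/
open MeasureTheory

/-- If `B` is an observation reach-avoid barrier function (ORBF) with level `p` for
the target set `T`, then `ℙ(RA(T, U) and X_{t_i} ∈ O_i for all i) ≤ p`, where `RA(T, U)` is the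
event that the process reaches `U` before reaching `T`. -/
theorem orbf_reach_avoid_guarantee
    {Ω : Type*} {m0 : MeasurableSpace Ω} (ℙ : Measure Ω) [IsProbabilityMeasure ℙ]
    (𝓕 : Filtration ℕ m0)
    {𝒳 : Type*} [MeasurableSpace 𝒳]
    (X : ℕ → Ω → 𝒳) (hX_adapted : ∀ n, Measurable[𝓕 n] (X n))
    (x₀ : 𝒳) (hX0 : ∀ᵐ ω ∂ℙ, X 0 ω = x₀)
    (U : Set 𝒳) (hU : MeasurableSet U)
    (T : Set 𝒳) (hT : MeasurableSet T) (hUT : Disjoint U T)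
    (k : ℕ) (t : Fin (k + 1) → ℕ) (ht : StrictMono t)
    (O : Fin (k + 1) → Set 𝒳) (hO : ∀ i, MeasurableSet (O i))
    (B : ℕ → 𝒳 → ℝ)
    (hB_meas : ∀ n, Measurable (B n))
    (hB_bdd : ∀ n, ∃ C : ℝ, ∀ x, |B n x| ≤ C)
    (p : ℝ)
    -- (i) nonnegativity
    (h_nonneg : ∀ n, ∀ x : 𝒳, 0 ≤ B n x)
    -- (ii) initial condition
    (h_init : B 0 x₀ ≤ p)
    -- (iii) barrier at least 1 on the unsafe set
    (h_unsafe : ∀ n, ∀ x ∈ U, 1 ≤ B n x)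
    -- (iv) supermartingale (drift) condition on `G n \ T`, for `n ≤ t_k`
    (h_drift₁ : ∀ n ≤ t (Fin.last k), ∀ᵐ ω ∂ℙ,
      (X n ω ∉ U ∧ X n ω ∉ T ∧ ∀ i, t i = n → X n ω ∈ O i) →
        (ℙ[fun ω' => B (n + 1) (X (n + 1) ω') | 𝓕 n]) ω ≤ B n (X n ω))
    -- (v) supermartingale (drift) condition outside `U ∪ T`, for `n > t_k`
    (h_drift₂ : ∀ n, t (Fin.last k) < n → ∀ᵐ ω ∂ℙ,
      X n ω ∉ U ∪ T → (ℙ[fun ω' => B (n + 1) (X (n + 1) ω') | 𝓕 n]) ω ≤ B n (X n ω)) :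
    ℙ {ω | (∃ n, X n ω ∈ U ∧ ∀ m < n, X m ω ∉ U ∪ T) ∧ ∀ i, X (t i) ω ∈ O i} ≤
      ENNReal.ofReal p := by
  classical
  -- the guard predicate
  set g : ℕ → 𝒳 → Prop := fun n x => x ∉ U ∧ x ∉ T ∧ ∀ i, t i = n → x ∈ O i with hg_def
  -- measurability of X w.r.t. the ambient σ-algebra
  have hX_meas : ∀ n, Measurable (X n) := fun n => (hX_adapted n).mono (𝓕.le n) le_rfl
  -- the guard sets are measurable
  have hg_meas : ∀ n, MeasurableSet {x | g n x} := by
    intro n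
    have : {x | g n x} = (Uᶜ ∩ Tᶜ) ∩ ⋂ i, {x | t i = n → x ∈ O i} := by
      ext x
      simp only [hg_def, Set.mem_setOf_eq, Set.mem_inter_iff, Set.mem_compl_iff,
        Set.mem_iInter]
      tauto
    rw [this]
    refine ((hU.compl.inter hT.compl).inter (MeasurableSet.iInter fun i => ?_))
    by_cases h : t i = n
    · simpa [h] using (hO i)
    · simp [h]
  -- the event that the guard has held up to time n
  set A : ℕ → Set Ω := fun n => ⋂ m, ⋂ _ : m ≤ n, (X m) ⁻¹' {x | g m x} with hA_def
  have hA_mem : ∀ n ω, ω ∈ A n ↔ ∀ m ≤ n, g m (X m ω) := by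
    intro n ω; simp [hA_def]
  have hA_meas : ∀ n, MeasurableSet[𝓕 n] (A n) := by
    intro n
    refine MeasurableSet.iInter fun m => MeasurableSet.iInter fun hm => ?_
    exact ((hX_adapted m).mono (𝓕.mono hm) le_rfl) (hg_meas m)
  have hA_meas0 : ∀ n, MeasurableSet (A n) := fun n => 𝓕.le n _ (hA_meas n)
  -- the stopped process
  set Z : ℕ → Ω → ℝ := fun n => Nat.rec (fun ω => B 0 (X 0 ω))
    (fun n Zn => (A n).piecewise (fun ω => B (n + 1) (X (n + 1) ω)) Zn) n with hZ_def
  have hZ_succ : ∀ n, Z (n + 1) =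
      (A n).piecewise (fun ω => B (n + 1) (X (n + 1) ω)) (Z n) := fun n => rfl
  -- basic properties of Z
  have hf_meas : ∀ n, Measurable (fun ω => B n (X n ω)) :=
    fun n => (hB_meas n).comp (hX_meas n)
  have hf_int : ∀ n, Integrable (fun ω => B n (X n ω)) ℙ := by
    intro n
    obtain ⟨C, hC⟩ := hB_bdd n
    refine (integrable_const C).mono' (hf_meas n).aestronglyMeasurable ?_
    exact Filter.Eventually.of_forall fun ω => by simpa using hC (X n ω)
  have hZ_meas : ∀ n, Measurable (Z n) := by
    intro n
    induction n with
    | zero => exact hf_meas 0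
    | succ n ih =>
      rw [hZ_succ]
      exact Measurable.piecewise (hA_meas0 n) (hf_meas (n + 1)) ih
  have hZ_int : ∀ n, Integrable (Z n) ℙ := by
    intro n
    induction n with
    | zero => exact hf_int 0
    | succ n ih =>
      rw [hZ_succ]
      exact Integrable.piecewise (hA_meas0 n) (hf_int (n + 1)).integrableOn ih.integrableOn
  have hZ_nonneg : ∀ n ω, 0 ≤ Z n ω := by
    intro n
    induction n with
    | zero => exact fun ω => h_nonneg 0 _
    | succ n ih =>
      intro ω
      rw [hZ_succ]
      by_cases h : ω ∈ A n
      · simp [Set.piecewise, h, h_nonneg]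
      · simpa [Set.piecewise, h] using ih ω
  -- Z n = B n (X n) as long as the guard has held strictly before n
  have hZ_eq : ∀ n ω, (∀ m < n, g m (X m ω)) → Z n ω = B n (X n ω) := by
    intro n
    induction n with
    | zero => intro ω _; rfl
    | succ n ih =>
      intro ω h
      rw [hZ_succ]
      have : ω ∈ A n := (hA_mem n ω).2 fun m hm => h m (Nat.lt_succ_of_le hm)
      simp [Set.piecewise, this]
  -- Z is frozen (at a value ≥ 1) once U is hit after the guard has held
  have hZ_frozen : ∀ m ω, X m ω ∈ U → (∀ j < m, g j (X j ω)) →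
      ∀ n, m ≤ n → Z n ω = B m (X m ω) := by
    intro m ω hU' hguard n hmn
    induction n with
    | zero =>
      have : m = 0 := Nat.le_zero.mp hmn
      subst this; rfl
    | succ n ih =>
      rcases Nat.lt_succ_iff_lt_or_eq.mp (Nat.lt_succ_of_le hmn) with h | h
      · have hZn := ih (Nat.lt_succ_iff.mp h)
        rw [hZ_succ]
        have hωA : ω ∉ A n := by
          intro hA'
          have := ((hA_mem n ω).1 hA') m (Nat.lt_succ_iff.mp h)
          exact this.1 hU'
        simp [Set.piecewise, hωA, hZn]
      · subst h
        exact hZ_eq (n + 1) ω hguard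
  -- the combined drift condition
  have h_drift : ∀ n, ∀ᵐ ω ∂ℙ, g n (X n ω) →
      (ℙ[fun ω' => B (n + 1) (X (n + 1) ω') | 𝓕 n]) ω ≤ B n (X n ω) := by
    intro n
    rcases le_or_gt n (t (Fin.last k)) with h | h
    · filter_upwards [h_drift₁ n h] with ω hω hgω
      exact hω ⟨hgω.1, hgω.2.1, hgω.2.2⟩
    · filter_upwards [h_drift₂ n h] with ω hω hgω
      exact hω (fun hmem => hmem.elim hgω.1 hgω.2.1)
  -- the expectation of Z is nonincreasing
  have hZ_exp : ∀ n, ∫ ω, Z n ω ∂ℙ ≤ p := by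
    intro n
    induction n with
    | zero =>
      calc ∫ ω, Z 0 ω ∂ℙ ≤ ∫ _ω, p ∂ℙ := by
            refine integral_mono_ae (hZ_int 0) (integrable_const p) ?_
            filter_upwards [hX0] with ω hω
            show B 0 (X 0 ω) ≤ p
            rw [hω]; exact h_init
        _ = p := by simp
    | succ n ih =>
      refine le_trans ?_ ih
      have h1 : ∫ ω, Z (n + 1) ω ∂ℙ =
          (∫ ω in A n, B (n + 1) (X (n + 1) ω) ∂ℙ) + ∫ ω in (A n)ᶜ, Z n ω ∂ℙ := by
        rw [hZ_succ]
        exact integral_piecewise (hA_meas0 n) (hf_int (n + 1)).integrableOn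
          (hZ_int n).integrableOn
      have h2 : ∫ ω in A n, B (n + 1) (X (n + 1) ω) ∂ℙ =
          ∫ ω in A n, (ℙ[fun ω' => B (n + 1) (X (n + 1) ω') | 𝓕 n]) ω ∂ℙ :=
        (setIntegral_condExp (𝓕.le n) (hf_int (n + 1)) (hA_meas n)).symm
      have h3 : ∫ ω in A n, (ℙ[fun ω' => B (n + 1) (X (n + 1) ω') | 𝓕 n]) ω ∂ℙ ≤
          ∫ ω in A n, Z n ω ∂ℙ := by
        refine setIntegral_mono_ae_restrict
          (integrable_condExp.integrableOn) (hZ_int n).integrableOn ?_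
        rw [Filter.EventuallyLE, ae_restrict_iff' (hA_meas0 n)]
        filter_upwards [h_drift n] with ω hω hωA
        have hgn : g n (X n ω) := ((hA_mem n ω).1 hωA) n le_rfl
        have hZn : Z n ω = B n (X n ω) :=
          hZ_eq n ω fun m hm => ((hA_mem n ω).1 hωA) m hm.le
        rw [hZn]
        exact hω hgn
      calc ∫ ω, Z (n + 1) ω ∂ℙ
          ≤ (∫ ω in A n, Z n ω ∂ℙ) + ∫ ω in (A n)ᶜ, Z n ω ∂ℙ := by
            rw [h1, h2]; exact add_le_add h3 le_rfl
        _ = ∫ ω, Z n ω ∂ℙ := integral_add_compl (hA_meas0 n) (hZ_int n)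
  -- Markov's inequality
  have hMarkov : ∀ n, ℙ {ω | 1 ≤ Z n ω} ≤ ENNReal.ofReal p := by
    intro n
    have := mul_meas_ge_le_integral_of_nonneg
      (Filter.Eventually.of_forall (hZ_nonneg n)) (hZ_int n) 1
    rw [one_mul] at this
    have hfin : ℙ {ω | 1 ≤ Z n ω} ≠ ⊤ := measure_ne_top _ _
    calc ℙ {ω | 1 ≤ Z n ω} = ENNReal.ofReal (ℙ {ω | 1 ≤ Z n ω}).toReal :=
          (ENNReal.ofReal_toReal hfin).symm
      _ ≤ ENNReal.ofReal p := ENNReal.ofReal_le_ofReal (this.trans (hZ_exp n))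
  -- the increasing family of events
  set D : ℕ → Set Ω := fun n =>
    {ω | ∃ m ≤ n, X m ω ∈ U ∧ ∀ j < m, g j (X j ω)} with hD_def
  have hD_mono : Monotone D := by
    intro a b hab ω ⟨m, hm, h⟩
    exact ⟨m, hm.trans hab, h⟩
  have hD_sub : ∀ n, D n ⊆ {ω | 1 ≤ Z n ω} := by
    rintro n ω ⟨m, hm, hU', hguard⟩
    have := hZ_frozen m ω hU' hguard n hm
    simpa [this] using h_unsafe m _ hU'
  -- the event of interest is contained in the union of the D n
  have h_sub : {ω | (∃ n, X n ω ∈ U ∧ ∀ m < n, X m ω ∉ U ∪ T) ∧ ∀ i, X (t i) ω ∈ O i}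
      ⊆ ⋃ n, D n := by
    rintro ω ⟨⟨n, hn, havoid⟩, hobs⟩
    refine Set.mem_iUnion.2 ⟨n, n, le_rfl, hn, fun j hj => ?_⟩
    refine ⟨fun h => (havoid j hj) (Or.inl h), fun h => (havoid j hj) (Or.inr h), ?_⟩
    intro i hi
    rw [← hi]
    exact hobs i
  calc ℙ {ω | (∃ n, X n ω ∈ U ∧ ∀ m < n, X m ω ∉ U ∪ T) ∧ ∀ i, X (t i) ω ∈ O i}
      ≤ ℙ (⋃ n, D n) := measure_mono h_sub
    _ = ⨆ n, ℙ (D n) := hD_mono.directed_le.measure_iUnion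
    _ ≤ ENNReal.ofReal p := by
        refine iSup_le fun n => ?_
        exact le_trans (measure_mono (hD_sub n)) (hMarkov n)
end

section
/- Suppose B is an observation reach-avoid barrier function (ORBF) with level p for the target set T, and let τ := inf{n ∈ ℕ : X_n ∈ U ∪ T}, which is a stopping time with respect to (𝓕_n). Then the stopped process (Y_{n∧τ})_{n∈ℕ} is a supermartingale with respect to (𝓕_n): for every n ∈ ℕ, E[Y_{(n+1)∧τ} | 𝓕_n] ≤ Y_{n∧τ} almost surely. -/
open MeasureTheory

lemma le_hitTime_iff {Ω 𝒳 : Type*} (X : ℕ → Ω → 𝒳) (S : Set 𝒳) (ω : Ω) (n : ℕ) :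
    (n : ℕ∞) ≤ hitTime X S ω ↔ ∀ i < n, X i ω ∉ S := by
  constructor
  · intro h i hi hmem
    have h1 : hitTime X S ω ≤ (i : ℕ∞) := iInf₂_le i hmem
    have := h.trans h1
    have : n ≤ i := by exact_mod_cast this
    omega
  · intro h
    refine le_iInf fun m => le_iInf fun hm => ?_
    have : n ≤ m := by
      by_contra hnm
      exact h m (Nat.lt_of_not_le hnm) hm
    exact_mod_cast this

lemma hitTime_min_toNat_eq {Ω 𝒳 : Type*} (X : ℕ → Ω → 𝒳) (S : Set 𝒳) (ω : Ω)
    {m j : ℕ} (hj : j ≤ m) :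
    (min (m : ℕ∞) (hitTime X S ω)).toNat = j ↔
      (∀ i < j, X i ω ∉ S) ∧ (j < m → X j ω ∈ S) := by
  have hne : min (m : ℕ∞) (hitTime X S ω) ≠ ⊤ :=
    ne_top_of_le_ne_top (by simp) (min_le_left _ _)
  rw [← ENat.coe_toNat_eq_self] at hne
  constructor
  · intro h
    rw [h] at hne
    have hmin : min (m : ℕ∞) (hitTime X S ω) = (j : ℕ∞) := hne.symm
    have hτ : (j : ℕ∞) ≤ hitTime X S ω := hmin ▸ min_le_right _ _
    refine ⟨(le_hitTime_iff X S ω j).mp hτ, fun hjm => ?_⟩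
    have hτ' : hitTime X S ω = (j : ℕ∞) := by
      rcases min_cases (m : ℕ∞) (hitTime X S ω) with ⟨hc, _⟩ | ⟨hc, _⟩
      · exfalso
        rw [hmin] at hc
        have : j = m := by exact_mod_cast hc
        omega
      · rw [← hmin, hc]
    obtain ⟨i, hij, hiS⟩ := (hitTime_le_iff X S ω j).mp hτ'.le
    have : i = j := by
      by_contra hij'
      exact (le_hitTime_iff X S ω j).mp hτ i (lt_of_le_of_ne hij hij') hiS
    exact this ▸ hiS
  · rintro ⟨h1, h2⟩
    have hτ : (j : ℕ∞) ≤ hitTime X S ω := (le_hitTime_iff X S ω j).mpr h1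
    rcases Nat.lt_or_ge j m with hjm | hjm
    · have hle : hitTime X S ω ≤ (j : ℕ∞) := iInf₂_le j (h2 hjm)
      have hτ' : hitTime X S ω = (j : ℕ∞) := le_antisymm hle hτ
      rw [hτ', min_eq_right (by exact_mod_cast hjm.le : (j:ℕ∞) ≤ (m:ℕ∞)), ENat.toNat_coe]
    · have hjm' : j = m := le_antisymm hj hjm
      subst hjm'
      rw [min_eq_left hτ, ENat.toNat_coe]

lemma prod01 {ι : Type*} (s : Finset ι) (f : ι → ℝ) (h : ∀ i ∈ s, f i = 0 ∨ f i = 1) :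
    (∏ i ∈ s, f i) = 0 ∨ (∏ i ∈ s, f i) = 1 := by
  classical
  by_cases hz : ∃ i ∈ s, f i = 0
  · obtain ⟨i, hi, h0⟩ := hz
    exact Or.inl (Finset.prod_eq_zero hi h0)
  · push_neg at hz
    exact Or.inr (Finset.prod_eq_one fun i hi => (h i hi).resolve_left (hz i hi))

lemma ind01 {𝒳 : Type*} (s : Set 𝒳) (x : 𝒳) :
    s.indicator (fun _ => (1:ℝ)) x = 0 ∨ s.indicator (fun _ => (1:ℝ)) x = 1 := by
  by_cases h : x ∈ s <;> simp [h]

lemma indmem {𝒳 : Type*} (s : Set 𝒳) (x : 𝒳) (h : s.indicator (fun _ => (1:ℝ)) x ≠ 0) :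
    x ∈ s := by
  by_cases hx : x ∈ s
  · exact hx
  · exact absurd (Set.indicator_of_notMem hx _) h

lemma Yproc_nonneg {Ω 𝒳 : Type*} (X : ℕ → Ω → 𝒳) (U : Set 𝒳) {k : ℕ}
    (t : Fin (k + 1) → ℕ) (O : Fin (k + 1) → Set 𝒳) (B : ℕ → 𝒳 → ℝ)
    (hB : ∀ m x, 0 ≤ B m x) (n : ℕ) (ω : Ω) : 0 ≤ Yproc X U t O B n ω := by
  unfold Yproc
  exact mul_nonneg (Finset.prod_nonneg fun i _ =>
      Set.indicator_nonneg (fun _ _ => zero_le_one) _)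
    (mul_nonneg (Finset.prod_nonneg fun i _ =>
      Set.indicator_nonneg (fun _ _ => zero_le_one) _) (hB _ _))

lemma Yproc_le_B {Ω 𝒳 : Type*} (X : ℕ → Ω → 𝒳) (U : Set 𝒳) {k : ℕ}
    (t : Fin (k + 1) → ℕ) (O : Fin (k + 1) → Set 𝒳) (B : ℕ → 𝒳 → ℝ)
    (hB : ∀ m x, 0 ≤ B m x) (n : ℕ) (ω : Ω) :
    Yproc X U t O B n ω ≤ B n (X n ω) := by
  unfold Yproc
  have h1 : (∏ i ∈ Finset.range n, Set.indicator Uᶜ (fun _ => (1 : ℝ)) (X i ω)) ≤ 1 :=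
    Finset.prod_le_one (fun i _ => Set.indicator_nonneg (fun _ _ => zero_le_one) _)
      (fun i _ => by rcases ind01 Uᶜ (X i ω) with h | h <;> rw [h] <;> norm_num)
  have h1' : (0:ℝ) ≤ ∏ i ∈ Finset.range n, Set.indicator Uᶜ (fun _ => (1 : ℝ)) (X i ω) :=
    Finset.prod_nonneg fun i _ => Set.indicator_nonneg (fun _ _ => zero_le_one) _
  have h2 : (∏ i ∈ Finset.univ.filter (fun i : Fin (k + 1) => t i < n),
      Set.indicator (O i) (fun _ => (1 : ℝ)) (X (t i) ω)) ≤ 1 :=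
    Finset.prod_le_one (fun i _ => Set.indicator_nonneg (fun _ _ => zero_le_one) _)
      (fun i _ => by rcases ind01 (O i) (X (t i) ω) with h | h <;> rw [h] <;> norm_num)
  have h2' : (0:ℝ) ≤ ∏ i ∈ Finset.univ.filter (fun i : Fin (k + 1) => t i < n),
      Set.indicator (O i) (fun _ => (1 : ℝ)) (X (t i) ω) :=
    Finset.prod_nonneg fun i _ => Set.indicator_nonneg (fun _ _ => zero_le_one) _
  have hb := hB n (X n ω)
  calc (∏ i ∈ Finset.range n, Set.indicator Uᶜ (fun _ => (1 : ℝ)) (X i ω)) *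
        ((∏ i ∈ Finset.univ.filter (fun i : Fin (k + 1) => t i < n),
          Set.indicator (O i) (fun _ => (1 : ℝ)) (X (t i) ω)) * B n (X n ω))
      ≤ 1 * ((∏ i ∈ Finset.univ.filter (fun i : Fin (k + 1) => t i < n),
          Set.indicator (O i) (fun _ => (1 : ℝ)) (X (t i) ω)) * B n (X n ω)) :=
        mul_le_mul_of_nonneg_right h1 (mul_nonneg h2' hb)
    _ = (∏ i ∈ Finset.univ.filter (fun i : Fin (k + 1) => t i < n),
          Set.indicator (O i) (fun _ => (1 : ℝ)) (X (t i) ω)) * B n (X n ω) := one_mul _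
    _ ≤ 1 * B n (X n ω) := mul_le_mul_of_nonneg_right h2 hb
    _ = B n (X n ω) := one_mul _

/-- If `B` is an ORBF with level `p` for the target set `T` and
`τ = inf {n | X_n ∈ U ∪ T}` (a stopping time w.r.t. `𝓕`), then the stopped process
`(Y_{n ∧ τ})_n` is a supermartingale: `E[Y_{(n+1) ∧ τ} | 𝓕_n] ≤ Y_{n ∧ τ}` a.s. for all `n`. -/
theorem orbf_stopped_supermartingale
    {Ω : Type*} {m0 : MeasurableSpace Ω} (ℙ : Measure Ω) [IsProbabilityMeasure ℙ]
    (𝓕 : Filtration ℕ m0)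
    {𝒳 : Type*} [MeasurableSpace 𝒳]
    (X : ℕ → Ω → 𝒳) (hX_adapted : ∀ n, Measurable[𝓕 n] (X n))
    (x₀ : 𝒳) (hX0 : ∀ᵐ ω ∂ℙ, X 0 ω = x₀)
    (U : Set 𝒳) (hU : MeasurableSet U)
    (T : Set 𝒳) (hT : MeasurableSet T) (hUT : Disjoint U T)
    (k : ℕ) (t : Fin (k + 1) → ℕ) (ht : StrictMono t)
    (O : Fin (k + 1) → Set 𝒳) (hO : ∀ i, MeasurableSet (O i))
    (B : ℕ → 𝒳 → ℝ)
    (hB_meas : ∀ n, Measurable (B n))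
    (hB_bdd : ∀ n, ∃ C : ℝ, ∀ x, |B n x| ≤ C)
    (p : ℝ)
    -- (i) nonnegativity
    (h_nonneg : ∀ n, ∀ x : 𝒳, 0 ≤ B n x)
    -- (ii) initial condition
    (h_init : B 0 x₀ ≤ p)
    -- (iii) barrier at least 1 on the unsafe set
    (h_unsafe : ∀ n, ∀ x ∈ U, 1 ≤ B n x)
    -- (iv) supermartingale (drift) condition on `G n \ T`, for `n ≤ t_k`
    (h_drift₁ : ∀ n ≤ t (Fin.last k), ∀ᵐ ω ∂ℙ,
      (X n ω ∉ U ∧ X n ω ∉ T ∧ ∀ i, t i = n → X n ω ∈ O i) →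
        (ℙ[fun ω' => B (n + 1) (X (n + 1) ω') | 𝓕 n]) ω ≤ B n (X n ω))
    -- (v) supermartingale (drift) condition outside `U ∪ T`, for `n > t_k`
    (h_drift₂ : ∀ n, t (Fin.last k) < n → ∀ᵐ ω ∂ℙ,
      X n ω ∉ U ∪ T → (ℙ[fun ω' => B (n + 1) (X (n + 1) ω') | 𝓕 n]) ω ≤ B n (X n ω)) :
    -- `τ` is a stopping time w.r.t. `𝓕`
    (∀ n : ℕ, MeasurableSet[𝓕 n] {ω | hitTime X (U ∪ T) ω ≤ (n : ℕ∞)}) ∧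
    -- the stopped process is a supermartingale
    (∀ n : ℕ, ∀ᵐ ω ∂ℙ,
      (ℙ[fun ω' =>
          Yproc X U t O B ((min (↑(n + 1)) (hitTime X (U ∪ T) ω')).toNat) ω' | 𝓕 n]) ω ≤
        Yproc X U t O B ((min (↑n) (hitTime X (U ∪ T) ω)).toNat) ω) := by
  classical
  have hUTm : MeasurableSet (U ∪ T) := hU.union hT
  have hτ_le : ∀ N : ℕ, MeasurableSet[𝓕 N] {ω | hitTime X (U ∪ T) ω ≤ (N : ℕ∞)} := by
    intro N
    have h1 : {ω | hitTime X (U ∪ T) ω ≤ (N : ℕ∞)}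
        = ⋃ i ∈ Finset.range (N + 1), X i ⁻¹' (U ∪ T) := by
      ext ω
      simp only [Set.mem_setOf_eq, hitTime_le_iff, Set.mem_iUnion, Finset.mem_range,
        Set.mem_preimage, Nat.lt_succ_iff, exists_prop]
    rw [h1]
    exact Finset.measurableSet_biUnion _ fun i hi =>
      𝓕.mono (Nat.lt_succ_iff.mp (Finset.mem_range.mp hi)) _ (hX_adapted i hUTm)
  refine ⟨hτ_le, fun n => ?_⟩
  have hXm : ∀ i, Measurable (X i) := fun i => (hX_adapted i).mono (𝓕.le i) le_rfl
  have hXmF : ∀ i ≤ n, Measurable[𝓕 n] (X i) :=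
    fun i hi => (hX_adapted i).mono (𝓕.mono hi) le_rfl
  -- the prefix indicator product
  set P : Ω → ℝ := fun ω =>
    (∏ i ∈ Finset.range (n + 1), Set.indicator Uᶜ (fun _ => (1 : ℝ)) (X i ω)) *
      ∏ i ∈ Finset.univ.filter (fun i : Fin (k + 1) => t i < n + 1),
        Set.indicator (O i) (fun _ => (1 : ℝ)) (X (t i) ω) with hP
  set S₀ : Set Ω := {ω | hitTime X (U ∪ T) ω ≤ (n : ℕ∞)} with hS₀
  set D : Ω → ℝ := S₀ᶜ.indicator P with hD
  set Bf : Ω → ℝ := fun ω => B (n + 1) (X (n + 1) ω) with hBf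
  set f : Ω → ℝ := S₀.indicator
    (fun ω => Yproc X U t O B ((min (↑n) (hitTime X (U ∪ T) ω)).toNat) ω) with hf
  -- measurability of Yproc
  have hYmF : ∀ j ≤ n, Measurable[𝓕 n] (fun ω => Yproc X U t O B j ω) := by
    intro j hj
    unfold Yproc
    refine Measurable.mul (Finset.measurable_prod _ fun i hi => ?_)
      (Measurable.mul (Finset.measurable_prod _ fun i hi => ?_) ?_)
    · exact (measurable_const.indicator hU.compl).comp
        (hXmF i (show i ≤ n by have := Finset.mem_range.mp hi; omega))
    · have hti : t i < j := (Finset.mem_filter.mp hi).2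
      exact (measurable_const.indicator (hO i)).comp (hXmF (t i) (by omega))
    · exact (hB_meas j).comp (hXmF j hj)
  have hYm : ∀ j, Measurable (fun ω => Yproc X U t O B j ω) := by
    intro j
    unfold Yproc
    refine Measurable.mul (Finset.measurable_prod _ fun i hi => ?_)
      (Measurable.mul (Finset.measurable_prod _ fun i hi => ?_) ?_)
    · exact (measurable_const.indicator hU.compl).comp (hXm i)
    · exact (measurable_const.indicator (hO i)).comp (hXm (t i))
    · exact (hB_meas j).comp (hXm j)
  -- integrability of Yproc
  have hYint : ∀ j, Integrable (fun ω => Yproc X U t O B j ω) ℙ := by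
    intro j
    obtain ⟨C, hC⟩ := hB_bdd j
    refine (integrable_const C).mono' (hYm j).aestronglyMeasurable (ae_of_all _ fun ω => ?_)
    rw [Real.norm_eq_abs, abs_of_nonneg (Yproc_nonneg X U t O B h_nonneg j ω)]
    exact le_trans (Yproc_le_B X U t O B h_nonneg j ω)
      (le_trans (le_abs_self _) (hC _))
  -- the level sets of the stopped index
  have hmin_le : ∀ (m : ℕ) (ω : Ω),
      (min (m : ℕ∞) (hitTime X (U ∪ T) ω)).toNat ≤ m := by
    intro m ω
    have h := ENat.toNat_le_toNat (min_le_left (m : ℕ∞) (hitTime X (U ∪ T) ω))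
      (by simp : (m : ℕ∞) ≠ ⊤)
    simpa using h
  have hE : ∀ j ≤ n, MeasurableSet[𝓕 n]
      {ω | (min (↑n) (hitTime X (U ∪ T) ω)).toNat = j} := by
    intro j hj
    by_cases hjn : j < n
    · have heq : {ω | (min (↑n : ℕ∞) (hitTime X (U ∪ T) ω)).toNat = j}
          = (⋂ i ∈ Finset.range j, (X i ⁻¹' (U ∪ T))ᶜ) ∩ X j ⁻¹' (U ∪ T) := by
        ext ω
        simp [hitTime_min_toNat_eq X (U ∪ T) ω hj, hjn]
      rw [heq]
      exact (Finset.measurableSet_biInter _ fun i hi =>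
          (𝓕.mono (show i ≤ n by have := Finset.mem_range.mp hi; omega) _
            (hX_adapted i hUTm)).compl).inter
        (𝓕.mono hjn.le _ (hX_adapted j hUTm))
    · have hjn' : j = n := by omega
      subst hjn'
      have heq : {ω | (min (↑j : ℕ∞) (hitTime X (U ∪ T) ω)).toNat = j}
          = ⋂ i ∈ Finset.range j, (X i ⁻¹' (U ∪ T))ᶜ := by
        ext ω
        simp [hitTime_min_toNat_eq X (U ∪ T) ω le_rfl]
      rw [heq]
      exact Finset.measurableSet_biInter _ fun i hi =>
        (𝓕.mono (show i ≤ j by have := Finset.mem_range.mp hi; omega) _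
          (hX_adapted i hUTm)).compl
  -- representation of the stopped process at time n as a finite sum
  have hZrep : (fun ω => Yproc X U t O B ((min (↑n) (hitTime X (U ∪ T) ω)).toNat) ω)
      = fun ω => ∑ j ∈ Finset.range (n + 1),
          Set.indicator {ω' | (min (↑n) (hitTime X (U ∪ T) ω')).toNat = j}
            (fun ω' => Yproc X U t O B j ω') ω := by
    funext ω
    have hcongr : ∀ j ∈ Finset.range (n + 1),
        Set.indicator {ω' | (min (↑n : ℕ∞) (hitTime X (U ∪ T) ω')).toNat = j}
          (fun ω' => Yproc X U t O B j ω') ω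
        = if (min (↑n : ℕ∞) (hitTime X (U ∪ T) ω)).toNat = j
            then Yproc X U t O B j ω else 0 := by
      intro j _
      simp [Set.indicator_apply]
    rw [Finset.sum_congr rfl hcongr, Finset.sum_ite_eq]
    simp [Nat.lt_succ_iff, hmin_le n ω]
  have hZnmF : Measurable[𝓕 n]
      (fun ω => Yproc X U t O B ((min (↑n) (hitTime X (U ∪ T) ω)).toNat) ω) := by
    rw [hZrep]
    exact Finset.measurable_sum _ fun j hj =>
      ((hYmF j (Nat.lt_succ_iff.mp (Finset.mem_range.mp hj))).indicator
        (hE j (Nat.lt_succ_iff.mp (Finset.mem_range.mp hj))))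
  have hZint : Integrable
      (fun ω => Yproc X U t O B ((min (↑n) (hitTime X (U ∪ T) ω)).toNat) ω) ℙ := by
    rw [hZrep]
    exact integrable_finset_sum _ fun j hj =>
      (hYint j).indicator (𝓕.le n _ (hE j (Nat.lt_succ_iff.mp (Finset.mem_range.mp hj))))
  have hS₀m : MeasurableSet[𝓕 n] S₀ := hτ_le n
  have hf_int : Integrable f ℙ := hZint.indicator (𝓕.le n _ hS₀m)
  have hf_smF : StronglyMeasurable[𝓕 n] f := (hZnmF.indicator hS₀m).stronglyMeasurable
  -- P and D
  have hPmF : Measurable[𝓕 n] P := by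
    rw [hP]
    refine Measurable.mul (Finset.measurable_prod _ fun i hi => ?_)
      (Finset.measurable_prod _ fun i hi => ?_)
    · exact (measurable_const.indicator hU.compl).comp
        (hXmF i (Nat.lt_succ_iff.mp (Finset.mem_range.mp hi)))
    · have hti : t i < n + 1 := (Finset.mem_filter.mp hi).2
      exact (measurable_const.indicator (hO i)).comp (hXmF (t i) (by omega))
  have hDmF : Measurable[𝓕 n] D := hPmF.indicator hS₀m.compl
  have hP01 : ∀ ω, P ω = 0 ∨ P ω = 1 := by
    intro ω
    have h1 := prod01 (Finset.range (n + 1))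
      (fun i => Set.indicator Uᶜ (fun _ => (1 : ℝ)) (X i ω)) (fun i _ => ind01 _ _)
    have h2 := prod01 (Finset.univ.filter (fun i : Fin (k + 1) => t i < n + 1))
      (fun i => Set.indicator (O i) (fun _ => (1 : ℝ)) (X (t i) ω)) (fun i _ => ind01 _ _)
    rw [hP]
    rcases h1 with h1 | h1 <;> rcases h2 with h2 | h2 <;> simp only [h1, h2, mul_zero, zero_mul, mul_one] <;> norm_num
  have hPmem : ∀ ω, P ω ≠ 0 →
      (∀ i ≤ n, X i ω ∈ Uᶜ) ∧ (∀ i : Fin (k + 1), t i ≤ n → X (t i) ω ∈ O i) := by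
    intro ω hP0
    rw [hP] at hP0
    simp only at hP0
    have h1 := left_ne_zero_of_mul hP0
    have h2 := right_ne_zero_of_mul hP0
    constructor
    · intro i hi
      exact indmem _ _ (Finset.prod_ne_zero_iff.mp h1 i
        (Finset.mem_range.mpr (Nat.lt_succ_of_le hi)))
    · intro i hti
      exact indmem _ _ (Finset.prod_ne_zero_iff.mp h2 i
        (Finset.mem_filter.mpr ⟨Finset.mem_univ _, Nat.lt_succ_of_le hti⟩))
  -- integrability of Bf and D * Bf
  obtain ⟨C, hC⟩ := hB_bdd (n + 1)
  have hBfm : Measurable Bf := (hB_meas (n + 1)).comp (hXm (n + 1))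
  have hBf_int : Integrable Bf ℙ :=
    (integrable_const C).mono' hBfm.aestronglyMeasurable
      (ae_of_all _ fun ω => by rw [Real.norm_eq_abs]; exact hC _)
  have hD01 : ∀ ω, D ω = 0 ∨ D ω = 1 := by
    intro ω
    by_cases hω : ω ∈ S₀ᶜ
    · rw [hD, Set.indicator_of_mem hω]; exact hP01 ω
    · rw [hD, Set.indicator_of_notMem hω]; exact Or.inl rfl
  have hg_int : Integrable (D * Bf) ℙ := by
    refine (integrable_const C).mono'
      (((hDmF.mono (𝓕.le n) le_rfl).mul hBfm).aestronglyMeasurable)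
      (ae_of_all _ fun ω => ?_)
    rw [Pi.mul_apply, Real.norm_eq_abs, abs_mul]
    rcases hD01 ω with h | h <;> rw [h]
    · simpa using le_trans (abs_nonneg _) (hC (X (n + 1) ω))
    · simpa using hC (X (n + 1) ω)
  -- pointwise decomposition of the stopped process at time n+1
  have hdecomp : (fun ω => Yproc X U t O B
      ((min (↑(n + 1)) (hitTime X (U ∪ T) ω)).toNat) ω) = f + D * Bf := by
    funext ω
    rw [Pi.add_apply, Pi.mul_apply]
    by_cases hω : hitTime X (U ∪ T) ω ≤ (n : ℕ∞)
    · have hω' : ω ∈ S₀ := hω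
      have hmin1 : min ((↑(n + 1) : ℕ∞)) (hitTime X (U ∪ T) ω) = hitTime X (U ∪ T) ω :=
        min_eq_right (hω.trans (by exact_mod_cast Nat.le_succ n))
      have hmin2 : min ((n : ℕ∞)) (hitTime X (U ∪ T) ω) = hitTime X (U ∪ T) ω :=
        min_eq_right hω
      rw [hf, Set.indicator_of_mem hω', hD, Set.indicator_of_notMem (Set.notMem_compl_iff.mpr hω'),
        zero_mul, add_zero, hmin1, hmin2]
    · have hω' : ω ∈ S₀ᶜ := hω
      have hlt : (n : ℕ∞) < hitTime X (U ∪ T) ω := lt_of_not_ge hω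
      have hge : ((↑(n + 1) : ℕ∞)) ≤ hitTime X (U ∪ T) ω := by
        have := (ENat.add_one_le_iff (by simp : (n : ℕ∞) ≠ ⊤)).mpr hlt
        calc ((↑(n + 1) : ℕ∞)) = (n : ℕ∞) + 1 := by push_cast; ring
          _ ≤ hitTime X (U ∪ T) ω := this
      have hmin1 : min ((↑(n + 1) : ℕ∞)) (hitTime X (U ∪ T) ω) = (↑(n + 1) : ℕ∞) :=
        min_eq_left hge
      rw [hf, Set.indicator_of_notMem (show ω ∉ S₀ from hω), hD, Set.indicator_of_mem hω',
        zero_add, hmin1, ENat.toNat_coe]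
      unfold Yproc
      rw [hP, hBf, mul_assoc]
  -- pointwise decomposition of the stopped process at time n
  have hZn_pt : ∀ ω, Yproc X U t O B ((min (↑n) (hitTime X (U ∪ T) ω)).toNat) ω
      = f ω + S₀ᶜ.indicator (fun ω' => Yproc X U t O B n ω') ω := by
    intro ω
    by_cases hω : hitTime X (U ∪ T) ω ≤ (n : ℕ∞)
    · have hω' : ω ∈ S₀ := hω
      rw [hf, Set.indicator_of_mem hω', Set.indicator_of_notMem (Set.notMem_compl_iff.mpr hω'), add_zero]
    · have hω' : ω ∈ S₀ᶜ := hω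
      have hlt : (n : ℕ∞) < hitTime X (U ∪ T) ω := lt_of_not_ge hω
      have hmin : min ((n : ℕ∞)) (hitTime X (U ∪ T) ω) = (n : ℕ∞) := min_eq_left hlt.le
      rw [hf, Set.indicator_of_notMem (show ω ∉ S₀ from hω), Set.indicator_of_mem hω',
        zero_add, hmin, ENat.toNat_coe]
  -- the conditional expectation identity
  have hcond : ℙ[fun ω' => Yproc X U t O B
      ((min (↑(n + 1)) (hitTime X (U ∪ T) ω')).toNat) ω' | 𝓕 n]
      =ᵐ[ℙ] f + D * ℙ[Bf | 𝓕 n] := by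
    rw [hdecomp]
    calc ℙ[f + D * Bf | 𝓕 n] =ᵐ[ℙ] ℙ[f | 𝓕 n] + ℙ[D * Bf | 𝓕 n] :=
        condExp_add hf_int hg_int _
      _ =ᵐ[ℙ] f + D * ℙ[Bf | 𝓕 n] := by
        rw [condExp_of_stronglyMeasurable (𝓕.le n) hf_smF hf_int]
        exact Filter.EventuallyEq.add (Filter.EventuallyEq.refl _ _)
          (condExp_mul_of_stronglyMeasurable_left hDmF.stronglyMeasurable hg_int hBf_int)
  -- drift inequality off S₀ when the prefix product is nonzero
  have hdrift : ∀ᵐ ω ∂ℙ, ¬ hitTime X (U ∪ T) ω ≤ (n : ℕ∞) → P ω ≠ 0 →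
      (ℙ[Bf | 𝓕 n]) ω ≤ B n (X n ω) := by
    have hXnUT : ∀ ω, ¬ hitTime X (U ∪ T) ω ≤ (n : ℕ∞) → X n ω ∉ U ∪ T := by
      intro ω hω hmem
      exact hω ((hitTime_le_iff X (U ∪ T) ω n).mpr ⟨n, le_rfl, hmem⟩)
    rcases le_or_gt n (t (Fin.last k)) with hc | hc
    · filter_upwards [h_drift₁ n hc] with ω hd hτω hP0
      obtain ⟨hU', hO'⟩ := hPmem ω hP0
      have hXn := hXnUT ω hτω
      refine hd ⟨fun h => hXn (Or.inl h), fun h => hXn (Or.inr h), fun i hti => ?_⟩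
      have := hO' i (le_of_eq hti)
      rwa [hti] at this
    · filter_upwards [h_drift₂ n hc] with ω hd hτω hP0
      exact hd (hXnUT ω hτω)
  -- Yproc n equals B n (X n) when all prefix indicators are 1
  have hYeq : ∀ ω, (∀ i ≤ n, X i ω ∈ Uᶜ) →
      (∀ i : Fin (k + 1), t i ≤ n → X (t i) ω ∈ O i) →
      Yproc X U t O B n ω = B n (X n ω) := by
    intro ω h1 h2
    unfold Yproc
    rw [Finset.prod_eq_one (fun i hi => by
        rw [Set.indicator_of_mem (h1 i (le_of_lt (Finset.mem_range.mp hi)))]),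
      Finset.prod_eq_one (fun i hi => by
        rw [Set.indicator_of_mem (h2 i (le_of_lt (Finset.mem_filter.mp hi).2))]),
      one_mul, one_mul]
  -- final assembly
  filter_upwards [hcond, hdrift] with ω hcω hdω
  rw [hcω, hZn_pt ω, Pi.add_apply, Pi.mul_apply]
  refine add_le_add (le_refl (f ω)) ?_
  by_cases hω : hitTime X (U ∪ T) ω ≤ (n : ℕ∞)
  · have hω' : ω ∈ S₀ := hω
    rw [hD, Set.indicator_of_notMem (Set.notMem_compl_iff.mpr hω'),
      Set.indicator_of_notMem (Set.notMem_compl_iff.mpr hω'), zero_mul]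
  · have hω' : ω ∈ S₀ᶜ := hω
    rw [hD, Set.indicator_of_mem hω', Set.indicator_of_mem hω']
    rcases hP01 ω with h0 | h1
    · rw [h0, zero_mul]
      exact Yproc_nonneg X U t O B h_nonneg n ω
    · rw [h1, one_mul]
      obtain ⟨hU', hO'⟩ := hPmem ω (by rw [h1]; exact one_ne_zero)
      rw [hYeq ω hU' hO']
      exact hdω hω (by rw [h1]; exact one_ne_zero)
end

section
/- Suppose B is an observation barrier function (OBF) with level q > 0 and B' is an observation reach-avoid barrier function (ORBF) with level p for the target set T, both for the same unsafe set U, observation times t_1 < ⋯ < t_k, and observation sets O_1, …, O_k. Suppose moreover that almost surely the process eventually enters U ∪ T, i.e. ℙ(∃ n ∈ ℕ, X_n ∈ U ∪ T) = 1. Let A denote the event {X_{t_i} ∈ O_i for all 1 ≤ i ≤ k, and X_n ∉ U for all n ≤ t_k}. Then ℙ(RA(U, T) | A) ≥ 1 − p/q, where RA(U, T) is the event {∃ n ∈ ℕ, X_n ∈ T and X_m ∉ U ∪ T for all m < n} (the process reaches the target set T before reaching the unsafe set U). -/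
open MeasureTheory

section Frozen
variable {Ω : Type*} {𝒳 : Type*}

noncomputable def frozen (X : ℕ → Ω → 𝒳) (f : ℕ → 𝒳 → ℝ) (stay : ℕ → Set 𝒳) : ℕ → Ω → ℝ
  | 0 => fun ω => f 0 (X 0 ω)
  | n+1 => fun ω => frozen X f stay n ω +
      Set.indicator {ω' | ∀ m ≤ n, X m ω' ∈ stay m}
        (fun ω' => f (n+1) (X (n+1) ω') - f n (X n ω')) ω

variable {X : ℕ → Ω → 𝒳} {f : ℕ → 𝒳 → ℝ} {stay : ℕ → Set 𝒳}

lemma frozen_of_alive : ∀ (n : ℕ) (ω : Ω), (∀ m < n, X m ω ∈ stay m) →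
    frozen X f stay n ω = f n (X n ω)
  | 0, ω, _ => rfl
  | n+1, ω, h => by
    have ha : ω ∈ {ω' | ∀ m ≤ n, X m ω' ∈ stay m} := fun m hm => h m (Nat.lt_succ_of_le hm)
    show frozen X f stay n ω + _ = _
    rw [Set.indicator_of_mem ha,
      frozen_of_alive n ω (fun m hm => h m (hm.trans (Nat.lt_succ_self n)))]
    ring

lemma frozen_of_dead : ∀ (n : ℕ) (ω : Ω) (m : ℕ), m ≤ n → (∀ j < m, X j ω ∈ stay j) →
    X m ω ∉ stay m → frozen X f stay n ω = f m (X m ω)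
  | 0, ω, m, hm, halive, _ => by
    obtain rfl : m = 0 := Nat.le_zero.mp hm; rfl
  | n+1, ω, m, hm, halive, hdead => by
    show frozen X f stay n ω + _ = _
    rcases eq_or_lt_of_le hm with rfl | h
    · have ha : ω ∈ {ω' | ∀ j ≤ n, X j ω' ∈ stay j} :=
        fun j hj => halive j (Nat.lt_succ_of_le hj)
      rw [Set.indicator_of_mem ha,
        frozen_of_alive n ω (fun j hj => halive j (hj.trans (Nat.lt_succ_self n)))]
      ring
    · have hmn : m ≤ n := Nat.lt_succ_iff.mp h
      have hna : ω ∉ {ω' | ∀ j ≤ n, X j ω' ∈ stay j} := fun hmem => hdead (hmem m hmn)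
      rw [Set.indicator_of_notMem hna, frozen_of_dead n ω m hmn halive hdead]
      ring

lemma frozen_exists_rep (n : ℕ) (ω : Ω) : ∃ m ≤ n, frozen X f stay n ω = f m (X m ω) := by
  by_cases h : ∀ m < n, X m ω ∈ stay m
  · exact ⟨n, le_rfl, frozen_of_alive n ω h⟩
  · push_neg at h
    have hex : ∃ m, X m ω ∉ stay m := by
      obtain ⟨m, _, hm⟩ := h; exact ⟨m, hm⟩
    classical
    let m₀ := Nat.find hex
    obtain ⟨m, hmn, hm⟩ := h
    have hm₀n : m₀ ≤ n := le_trans (Nat.find_le hm) hmn.le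
    exact ⟨m₀, hm₀n, frozen_of_dead n ω m₀ hm₀n
      (fun j hj => by_contra fun hj' => (Nat.find_min hex hj hj')) (Nat.find_spec hex)⟩

lemma frozen_bdd (hfb : ∀ n, ∃ C : ℝ, ∀ x, |f n x| ≤ C) (n : ℕ) :
    ∃ C : ℝ, ∀ ω, |frozen X f stay n ω| ≤ C := by
  choose C hC using hfb
  refine ⟨∑ m ∈ Finset.range (n+1), |C m|, fun ω => ?_⟩
  obtain ⟨m, hmn, hrep⟩ := frozen_exists_rep (stay := stay) n ω
  rw [hrep]
  calc |f m (X m ω)| ≤ C m := hC m _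
    _ ≤ |C m| := le_abs_self _
    _ ≤ ∑ m ∈ Finset.range (n+1), |C m| :=
        Finset.single_le_sum (f := fun m => |C m|) (fun _ _ => abs_nonneg _)
          (Finset.mem_range.mpr (Nat.lt_succ_of_le hmn))

end Frozen

section FrozenMeas
variable {Ω 𝒳 : Type*} {m0 : MeasurableSpace Ω} [MeasurableSpace 𝒳]
variable {X : ℕ → Ω → 𝒳} {f : ℕ → 𝒳 → ℝ} {stay : ℕ → Set 𝒳}

lemma alive_measurableSet (𝓕 : Filtration ℕ m0) (hX : ∀ n, Measurable[𝓕 n] (X n))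
    (hstay : ∀ n, MeasurableSet (stay n)) (n : ℕ) :
    MeasurableSet[𝓕 n] {ω' | ∀ m ≤ n, X m ω' ∈ stay m} := by
  have : {ω' | ∀ m ≤ n, X m ω' ∈ stay m} = ⋂ m ∈ Set.Iic n, (X m) ⁻¹' stay m := by
    ext ω; simp [Set.mem_iInter]
  rw [this]
  exact MeasurableSet.biInter (Set.to_countable _) fun m hm =>
    ((hX m).mono (𝓕.mono hm) le_rfl) (hstay m)

lemma frozen_measurable (𝓕 : Filtration ℕ m0) (hX : ∀ n, Measurable[𝓕 n] (X n))
    (hf : ∀ n, Measurable (f n)) (hstay : ∀ n, MeasurableSet (stay n)) :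
    ∀ n, Measurable[𝓕 n] (frozen X f stay n)
  | 0 => (hf 0).comp (hX 0)
  | n+1 => by
    show Measurable[𝓕 (n+1)] fun ω => frozen X f stay n ω + _
    have h1 : Measurable[𝓕 (n+1)] (frozen X f stay n) :=
      (frozen_measurable 𝓕 hX hf hstay n).mono (𝓕.mono (Nat.le_succ n)) le_rfl
    have h2 : Measurable[𝓕 (n+1)] fun ω' => f (n+1) (X (n+1) ω') - f n (X n ω') :=
      ((hf (n+1)).comp (hX (n+1))).sub
        ((hf n).comp ((hX n).mono (𝓕.mono (Nat.le_succ n)) le_rfl))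
    exact h1.add (h2.indicator (𝓕.mono (Nat.le_succ n) _ (alive_measurableSet 𝓕 hX hstay n)))

lemma frozen_integrable (𝓕 : Filtration ℕ m0) (hX : ∀ n, Measurable[𝓕 n] (X n))
    (hf : ∀ n, Measurable (f n)) (hfb : ∀ n, ∃ C : ℝ, ∀ x, |f n x| ≤ C)
    (hstay : ∀ n, MeasurableSet (stay n)) (ℙ : Measure Ω) [IsFiniteMeasure ℙ] (n : ℕ) :
    Integrable (frozen X f stay n) ℙ := by
  obtain ⟨C, hC⟩ := frozen_bdd (X := X) (stay := stay) hfb n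
  exact Integrable.mono' (integrable_const C)
    (((frozen_measurable 𝓕 hX hf hstay n).mono (𝓕.le n) le_rfl).aestronglyMeasurable)
    (ae_of_all _ fun ω => by rw [Real.norm_eq_abs]; exact hC ω)

lemma comp_integrable (hfn : Measurable (f n)) (hfb : ∃ C : ℝ, ∀ x, |f n x| ≤ C)
    (hXn : Measurable (X n)) (ℙ : Measure Ω) [IsFiniteMeasure ℙ] :
    Integrable (fun ω => f n (X n ω)) ℙ := by
  obtain ⟨C, hC⟩ := hfb
  exact Integrable.mono' (integrable_const C) ((hfn.comp hXn).aestronglyMeasurable)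
    (ae_of_all _ fun ω => by rw [Real.norm_eq_abs]; exact hC _)

lemma frozen_integral_le_succ (ℙ : Measure Ω) [IsProbabilityMeasure ℙ]
    (𝓕 : Filtration ℕ m0) (hX : ∀ n, Measurable[𝓕 n] (X n)) (hf : ∀ n, Measurable (f n))
    (hfb : ∀ n, ∃ C : ℝ, ∀ x, |f n x| ≤ C) (hstay : ∀ n, MeasurableSet (stay n)) (n : ℕ)
    (hdrift : ∀ᵐ ω ∂ℙ, (∀ m ≤ n, X m ω ∈ stay m) →
      f n (X n ω) ≤ (ℙ[fun ω' => f (n+1) (X (n+1) ω') | 𝓕 n]) ω) :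
    ∫ ω, frozen X f stay n ω ∂ℙ ≤ ∫ ω, frozen X f stay (n+1) ω ∂ℙ := by
  set S := {ω' | ∀ m ≤ n, X m ω' ∈ stay m} with hSdef
  have hS𝓕 : MeasurableSet[𝓕 n] S := alive_measurableSet 𝓕 hX hstay n
  have hS : MeasurableSet S := 𝓕.le n _ hS𝓕
  have hg : Integrable (fun ω => f (n+1) (X (n+1) ω)) ℙ :=
    comp_integrable (hf (n+1)) (hfb (n+1)) ((hX (n+1)).mono (𝓕.le (n+1)) le_rfl) ℙ
  have hh : Integrable (fun ω => f n (X n ω)) ℙ :=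
    comp_integrable (hf n) (hfb n) ((hX n).mono (𝓕.le n) le_rfl) ℙ
  have hfr : Integrable (frozen X f stay n) ℙ := frozen_integrable 𝓕 hX hf hfb hstay ℙ n
  have key : (0:ℝ) ≤ ∫ ω, S.indicator (fun ω' => f (n+1) (X (n+1) ω') - f n (X n ω')) ω ∂ℙ := by
    rw [integral_indicator hS]
    have h1 : ∫ ω in S, (f (n+1) (X (n+1) ω) - f n (X n ω)) ∂ℙ
        = ∫ ω in S, ((ℙ[fun ω' => f (n+1) (X (n+1) ω') | 𝓕 n]) ω - f n (X n ω)) ∂ℙ := by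
      rw [integral_sub (hg.restrict) (hh.restrict),
        integral_sub ((integrable_condExp).restrict) (hh.restrict),
        setIntegral_condExp (𝓕.le n) hg hS𝓕]
    rw [h1]
    refine setIntegral_nonneg_ae hS (hdrift.mono fun ω h hω => sub_nonneg.2 (h hω))
  calc ∫ ω, frozen X f stay n ω ∂ℙ
      ≤ ∫ ω, frozen X f stay n ω ∂ℙ
        + ∫ ω, S.indicator (fun ω' => f (n+1) (X (n+1) ω') - f n (X n ω')) ω ∂ℙ :=
        le_add_of_nonneg_right key
    _ = ∫ ω, (frozen X f stay n ω
        + S.indicator (fun ω' => f (n+1) (X (n+1) ω') - f n (X n ω')) ω) ∂ℙ := by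
        have hind : Integrable
            (fun ω => S.indicator (fun ω' => f (n+1) (X (n+1) ω') - f n (X n ω')) ω) ℙ := by
          exact (hg.sub hh).indicator hS
        exact (integral_add hfr hind).symm
    _ = ∫ ω, frozen X f stay (n+1) ω ∂ℙ := rfl

lemma frozen_integral_mono (ℙ : Measure Ω) [IsProbabilityMeasure ℙ]
    (𝓕 : Filtration ℕ m0) (hX : ∀ n, Measurable[𝓕 n] (X n)) (hf : ∀ n, Measurable (f n))
    (hfb : ∀ n, ∃ C : ℝ, ∀ x, |f n x| ≤ C) (hstay : ∀ n, MeasurableSet (stay n)) (N : ℕ)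
    (hdrift : ∀ n < N, ∀ᵐ ω ∂ℙ, (∀ m ≤ n, X m ω ∈ stay m) →
      f n (X n ω) ≤ (ℙ[fun ω' => f (n+1) (X (n+1) ω') | 𝓕 n]) ω) :
    ∫ ω, f 0 (X 0 ω) ∂ℙ ≤ ∫ ω, frozen X f stay N ω ∂ℙ := by
  induction N with
  | zero => exact le_rfl
  | succ N ih =>
    exact le_trans (ih fun n hn => hdrift n (hn.trans (Nat.lt_succ_self N)))
      (frozen_integral_le_succ ℙ 𝓕 hX hf hfb hstay N (hdrift N (Nat.lt_succ_self N)))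

end FrozenMeas

lemma frozen_neg {Ω 𝒳 : Type*} {X : ℕ → Ω → 𝒳} {f : ℕ → 𝒳 → ℝ} {stay : ℕ → Set 𝒳} :
    ∀ (n : ℕ) (ω : Ω), frozen X (fun m x => -f m x) stay n ω = -frozen X f stay n ω
  | 0, ω => rfl
  | n+1, ω => by
    have h1 : frozen X (fun m x => -f m x) stay (n+1) ω
        = frozen X (fun m x => -f m x) stay n ω
          + Set.indicator {ω' | ∀ m ≤ n, X m ω' ∈ stay m}
            (fun ω' => -f (n+1) (X (n+1) ω') - -f n (X n ω')) ω := rfl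
    have h2 : frozen X f stay (n+1) ω = frozen X f stay n ω
          + Set.indicator {ω' | ∀ m ≤ n, X m ω' ∈ stay m}
            (fun ω' => f (n+1) (X (n+1) ω') - f n (X n ω')) ω := rfl
    rw [h1, h2, frozen_neg n ω]
    by_cases h : ω ∈ {ω' | ∀ m ≤ n, X m ω' ∈ stay m}
    · rw [Set.indicator_of_mem h, Set.indicator_of_mem h]; ring
    · rw [Set.indicator_of_notMem h, Set.indicator_of_notMem h]; ring

/-- If `B` is an OBF with level `q > 0` and `B'` is an ORBF with level `p` for the
target set `T` (for the same unsafe set, observation times and observation sets), and the process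
almost surely eventually enters `U ∪ T`, then, with `A` the event
`{X_{t_i} ∈ O_i for all i and X_n ∉ U for all n ≤ t_k}`, we have `ℙ(RA(U, T) | A) ≥ 1 − p/q`,
where `RA(U, T)` is the event that the process reaches `T` before reaching `U`. -/
theorem conditional_reach_avoid_guarantee
    {Ω : Type*} {m0 : MeasurableSpace Ω} (ℙ : Measure Ω) [IsProbabilityMeasure ℙ]
    (𝓕 : Filtration ℕ m0)
    {𝒳 : Type*} [MeasurableSpace 𝒳]
    (X : ℕ → Ω → 𝒳) (hX_adapted : ∀ n, Measurable[𝓕 n] (X n))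
    (x₀ : 𝒳) (hX0 : ∀ᵐ ω ∂ℙ, X 0 ω = x₀)
    (U : Set 𝒳) (hU : MeasurableSet U)
    (T : Set 𝒳) (hT : MeasurableSet T) (hUT : Disjoint U T)
    (k : ℕ) (t : Fin (k + 1) → ℕ) (ht : StrictMono t)
    (O : Fin (k + 1) → Set 𝒳) (hO : ∀ i, MeasurableSet (O i))
    (B B' : ℕ → 𝒳 → ℝ)
    (hB_meas : ∀ n, Measurable (B n)) (hB'_meas : ∀ n, Measurable (B' n))
    (hB_bdd : ∀ n, ∃ C : ℝ, ∀ x, |B n x| ≤ C)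
    (hB'_bdd : ∀ n, ∃ C : ℝ, ∀ x, |B' n x| ≤ C)
    (q p : ℝ) (hq : 0 < q)
    -- `B` is an OBF with level `q`:
    (h_init : q ≤ B 0 x₀)
    (h_drift : ∀ n ≤ t (Fin.last k), ∀ᵐ ω ∂ℙ,
      (X n ω ∉ U ∧ ∀ i, t i = n → X n ω ∈ O i) →
        B n (X n ω) ≤ (ℙ[fun ω' => B (n + 1) (X (n + 1) ω') | 𝓕 n]) ω)
    (h_nonpos : ∀ n ≤ t (Fin.last k), ∀ x : 𝒳,
      ¬(x ∉ U ∧ ∀ i, t i = n → x ∈ O i) → B n x ≤ 0)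
    (h_term : ∀ x : 𝒳, B (t (Fin.last k) + 1) x ≤ 1)
    -- `B'` is an ORBF with level `p` for the target set `T`:
    (h'_nonneg : ∀ n, ∀ x : 𝒳, 0 ≤ B' n x)
    (h'_init : B' 0 x₀ ≤ p)
    (h'_unsafe : ∀ n, ∀ x ∈ U, 1 ≤ B' n x)
    (h'_drift₁ : ∀ n ≤ t (Fin.last k), ∀ᵐ ω ∂ℙ,
      (X n ω ∉ U ∧ X n ω ∉ T ∧ ∀ i, t i = n → X n ω ∈ O i) →
        (ℙ[fun ω' => B' (n + 1) (X (n + 1) ω') | 𝓕 n]) ω ≤ B' n (X n ω))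
    (h'_drift₂ : ∀ n, t (Fin.last k) < n → ∀ᵐ ω ∂ℙ,
      X n ω ∉ U ∪ T → (ℙ[fun ω' => B' (n + 1) (X (n + 1) ω') | 𝓕 n]) ω ≤ B' n (X n ω))
    -- the process almost surely eventually enters `U ∪ T`
    (h_eventually : ℙ {ω | ∃ n, X n ω ∈ U ∪ T} = 1) :
    ENNReal.ofReal (1 - p / q) ≤
      ProbabilityTheory.cond ℙ
        {ω | (∀ i, X (t i) ω ∈ O i) ∧ ∀ n ≤ t (Fin.last k), X n ω ∉ U}
        {ω | ∃ n, X n ω ∈ T ∧ ∀ m < n, X m ω ∉ U ∪ T} := by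
  classical
  have hXm : ∀ n, Measurable (X n) := fun n => (hX_adapted n).mono (𝓕.le n) le_rfl
  have hp0 : 0 ≤ p := le_trans (h'_nonneg 0 x₀) h'_init
  set tk := t (Fin.last k) with htk
  have hobs : ∀ n : ℕ, MeasurableSet {x : 𝒳 | ∀ i, t i = n → x ∈ O i} := by
    intro n
    have h : {x : 𝒳 | ∀ i, t i = n → x ∈ O i} = ⋂ i, ⋂ (_ : t i = n), O i := by
      ext x; simp
    rw [h]
    exact MeasurableSet.iInter fun i => MeasurableSet.iInter fun _ => hO i
  set stayB : ℕ → Set 𝒳 := fun n => {x | x ∉ U ∧ ∀ i, t i = n → x ∈ O i} with hstayBdef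
  set stayB' : ℕ → Set 𝒳 := fun n => {x | x ∉ U ∧ x ∉ T ∧ ∀ i, t i = n → x ∈ O i}
    with hstayB'def
  have hstayB : ∀ n, MeasurableSet (stayB n) := fun n => by
    exact hU.compl.inter (hobs n)
  have hstayB' : ∀ n, MeasurableSet (stayB' n) := fun n => by
    exact hU.compl.inter (hT.compl.inter (hobs n))
  set A := {ω | (∀ i, X (t i) ω ∈ O i) ∧ ∀ n ≤ tk, X n ω ∉ U} with hAdef
  set RA := {ω | ∃ n, X n ω ∈ T ∧ ∀ m < n, X m ω ∉ U ∪ T} with hRAdef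
  set HU := {ω | ∃ n, X n ω ∈ U ∧ ∀ m < n, X m ω ∉ U ∪ T} with hHUdef
  have hA_meas : MeasurableSet A := by
    have h1 : MeasurableSet {ω | ∀ i, X (t i) ω ∈ O i} := by
      have h : {ω | ∀ i, X (t i) ω ∈ O i} = ⋂ i, X (t i) ⁻¹' O i := by ext ω; simp
      rw [h]; exact MeasurableSet.iInter fun i => (hXm (t i)) (hO i)
    have h2 : MeasurableSet {ω | ∀ n ≤ tk, X n ω ∉ U} := by
      have h : {ω | ∀ n ≤ tk, X n ω ∉ U} = ⋂ n, ⋂ (_ : n ≤ tk), (X n) ⁻¹' Uᶜ := by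
        ext ω; simp
      rw [h]
      exact MeasurableSet.iInter fun n => MeasurableSet.iInter fun _ => (hXm n) hU.compl
    exact h1.inter h2
  -- Step 1: `ℙ A ≥ q` using the OBF `B`.
  have hAq : ENNReal.ofReal q ≤ ℙ A := by
    have hdrift : ∀ n < tk + 1, ∀ᵐ ω ∂ℙ, (∀ m ≤ n, X m ω ∈ stayB m) →
        B n (X n ω) ≤ (ℙ[fun ω' => B (n + 1) (X (n + 1) ω') | 𝓕 n]) ω := fun n hn =>
      (h_drift n (Nat.lt_succ_iff.mp hn)).mono fun ω h halive => h (halive n le_rfl)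
    have h0 : ∫ ω, B 0 (X 0 ω) ∂ℙ = B 0 x₀ := by
      rw [integral_congr_ae (hX0.mono fun ω h => by rw [h])]; simp
    have hmono := frozen_integral_mono ℙ 𝓕 hX_adapted hB_meas hB_bdd hstayB (tk+1) hdrift
    rw [h0] at hmono
    have hpt : ∀ ω, frozen X B stayB (tk+1) ω ≤ Set.indicator A (fun _ => (1:ℝ)) ω := by
      intro ω
      by_cases hA : ω ∈ A
      · have halive : ∀ m < tk + 1, X m ω ∈ stayB m := fun m hm =>
          ⟨hA.2 m (Nat.lt_succ_iff.mp hm), fun i hi => hi ▸ hA.1 i⟩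
        rw [frozen_of_alive _ ω halive, Set.indicator_of_mem hA]
        exact h_term _
      · rw [Set.indicator_of_notMem hA]
        have hex0 : ∃ m, X m ω ∉ stayB m ∧ m ≤ tk := by
          rcases not_and_or.mp hA with hP | hQ
          · push_neg at hP
            obtain ⟨i, hi⟩ := hP
            exact ⟨t i, fun hmem => hi (hmem.2 i rfl), ht.monotone (Fin.le_last i)⟩
          · push_neg at hQ
            obtain ⟨n, hn, hnU⟩ := hQ
            exact ⟨n, fun hmem => hmem.1 hnU, hn⟩
        obtain ⟨m, hm, hmtk⟩ := hex0
        have hex' : ∃ j, X j ω ∉ stayB j := ⟨m, hm⟩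
        have hm₀tk : Nat.find hex' ≤ tk := (Nat.find_min' hex' hm).trans hmtk
        have halive : ∀ j < Nat.find hex', X j ω ∈ stayB j := fun j hj =>
          by_contra fun hj' => Nat.find_min hex' hj hj'
        rw [frozen_of_dead (tk+1) ω (Nat.find hex') (hm₀tk.trans (Nat.le_succ tk)) halive
          (Nat.find_spec hex')]
        exact h_nonpos (Nat.find hex') hm₀tk _ (Nat.find_spec hex')
    have hint : ∫ ω, frozen X B stayB (tk+1) ω ∂ℙ ≤ (ℙ A).toReal := by
      calc ∫ ω, frozen X B stayB (tk+1) ω ∂ℙ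
          ≤ ∫ ω, Set.indicator A (fun _ => (1:ℝ)) ω ∂ℙ :=
            integral_mono (frozen_integrable 𝓕 hX_adapted hB_meas hB_bdd hstayB ℙ _)
              ((integrable_const (1:ℝ)).indicator hA_meas) hpt
        _ = (ℙ A).toReal := by rw [integral_indicator hA_meas]; simp; rfl
    have hqt : q ≤ (ℙ A).toReal := le_trans (le_trans h_init hmono) hint
    calc ENNReal.ofReal q ≤ ENNReal.ofReal (ℙ A).toReal := ENNReal.ofReal_le_ofReal hqt
      _ = ℙ A := ENNReal.ofReal_toReal (measure_ne_top ℙ A)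
  -- Step 2: `ℙ (A ∩ HU) ≤ p` using the ORBF `B'`.
  have hHUp : ℙ (A ∩ HU) ≤ ENNReal.ofReal p := by
    have hg_meas : ∀ n, Measurable (fun x => -B' n x) := fun n => (hB'_meas n).neg
    have hg_bdd : ∀ n, ∃ C : ℝ, ∀ x, |(fun x => -B' n x) x| ≤ C := fun n => by
      obtain ⟨C, hC⟩ := hB'_bdd n
      exact ⟨C, fun x => by rw [abs_neg]; exact hC x⟩
    have hgdrift : ∀ n, ∀ᵐ ω ∂ℙ, (∀ m ≤ n, X m ω ∈ stayB' m) →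
        (fun m x => -B' m x) n (X n ω)
          ≤ (ℙ[fun ω' => (fun m x => -B' m x) (n+1) (X (n+1) ω') | 𝓕 n]) ω := by
      intro n
      have hneg : (ℙ[fun ω' => (fun m x => -B' m x) (n+1) (X (n+1) ω') | 𝓕 n])
          =ᵐ[ℙ] fun ω => -(ℙ[fun ω' => B' (n+1) (X (n+1) ω') | 𝓕 n]) ω :=
        condExp_neg (μ := ℙ) (m := 𝓕 n) (fun ω' => B' (n+1) (X (n+1) ω'))
      rcases le_or_gt n tk with hn | hn
      · filter_upwards [h'_drift₁ n hn, hneg] with ω hd he halive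
        have hst := halive n le_rfl
        rw [he]
        exact neg_le_neg (hd ⟨hst.1, hst.2.1, hst.2.2⟩)
      · filter_upwards [h'_drift₂ n hn, hneg] with ω hd he halive
        have hst := halive n le_rfl
        rw [he]
        exact neg_le_neg (hd fun h => h.elim hst.1 hst.2.1)
    have hsup : ∀ N, ∫ ω, frozen X B' stayB' N ω ∂ℙ ≤ p := by
      intro N
      have hmono := frozen_integral_mono ℙ 𝓕 hX_adapted hg_meas hg_bdd hstayB' N
        (fun n _ => hgdrift n)
      have h0 : ∫ ω, (fun m x => -B' m x) 0 (X 0 ω) ∂ℙ = -(B' 0 x₀) := by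
        rw [integral_congr_ae (hX0.mono fun ω h => by simp only []; rw [h])]; simp
      have hfe : ∀ ω, frozen X (fun m x => -B' m x) stayB' N ω = -frozen X B' stayB' N ω :=
        fun ω => frozen_neg N ω
      rw [h0, integral_congr_ae (ae_of_all _ hfe), integral_neg] at hmono
      have := neg_le_neg hmono
      rw [neg_neg, neg_neg] at this
      exact this.trans h'_init
    set E : ℕ → Set Ω := fun N => {ω | ∃ m ≤ N, (∀ j < m, X j ω ∈ stayB' j) ∧ X m ω ∈ U}
      with hEdef
    have hEmono : Monotone E := by
      intro N N' hNN' ω hω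
      obtain ⟨m, hm, h⟩ := hω
      exact ⟨m, hm.trans hNN', h⟩
    have hEmeas : ∀ N, MeasurableSet (E N) := by
      intro N
      have h : E N = ⋃ m, ⋃ (_ : m ≤ N),
          ((⋂ j, ⋂ (_ : j < m), X j ⁻¹' stayB' j) ∩ X m ⁻¹' U) := by
        ext ω
        simp only [hEdef, Set.mem_setOf_eq, Set.mem_iUnion, Set.mem_inter_iff,
          Set.mem_iInter, Set.mem_preimage]
        tauto
      rw [h]
      exact MeasurableSet.iUnion fun m => MeasurableSet.iUnion fun _ =>
        ((MeasurableSet.iInter fun j => MeasurableSet.iInter fun _ =>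
          (hXm j) (hstayB' j)).inter ((hXm m) hU))
    have hEbound : ∀ N, ℙ (E N) ≤ ENNReal.ofReal p := by
      intro N
      have hpt : ∀ ω, Set.indicator (E N) (fun _ => (1:ℝ)) ω ≤ frozen X B' stayB' N ω := by
        intro ω
        by_cases hE : ω ∈ E N
        · rw [Set.indicator_of_mem hE]
          obtain ⟨m, hmN, halive, hmU⟩ := hE
          have hdead : X m ω ∉ stayB' m := fun hmem => hmem.1 hmU
          rw [frozen_of_dead N ω m hmN halive hdead]
          exact h'_unsafe m _ hmU
        · rw [Set.indicator_of_notMem hE]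
          obtain ⟨m, _, hrep⟩ := frozen_exists_rep (X := X) (f := B') (stay := stayB') N ω
          rw [hrep]; exact h'_nonneg m _
      have hto : (ℙ (E N)).toReal ≤ p := by
        calc (ℙ (E N)).toReal = ∫ ω, Set.indicator (E N) (fun _ => (1:ℝ)) ω ∂ℙ := by
              rw [integral_indicator (hEmeas N)]; simp; rfl
          _ ≤ ∫ ω, frozen X B' stayB' N ω ∂ℙ :=
              integral_mono ((integrable_const (1:ℝ)).indicator (hEmeas N))
                (frozen_integrable 𝓕 hX_adapted hB'_meas hB'_bdd hstayB' ℙ N) hpt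
          _ ≤ p := hsup N
      calc ℙ (E N) = ENNReal.ofReal (ℙ (E N)).toReal :=
            (ENNReal.ofReal_toReal (measure_ne_top _ _)).symm
        _ ≤ ENNReal.ofReal p := ENNReal.ofReal_le_ofReal hto
    have hsub : A ∩ HU ⊆ ⋃ N, E N := by
      rintro ω ⟨hA, hHU⟩
      obtain ⟨n, hnU, hpre⟩ := hHU
      refine Set.mem_iUnion.mpr ⟨n, n, le_rfl, fun j hj => ?_, hnU⟩
      exact ⟨fun h => hpre j hj (Or.inl h), fun h => hpre j hj (Or.inr h),
        fun i hi => hi ▸ hA.1 i⟩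
    calc ℙ (A ∩ HU) ≤ ℙ (⋃ N, E N) := measure_mono hsub
      _ = ⨆ N, ℙ (E N) := hEmono.measure_iUnion
      _ ≤ ENNReal.ofReal p := iSup_le hEbound
  -- Step 3: covering `A` by `A ∩ RA` and `A ∩ HU` up to a null set.
  have hcover : ℙ A ≤ ℙ (A ∩ RA) + ENNReal.ofReal p := by
    set Ev := {ω | ∃ n, X n ω ∈ U ∪ T} with hEvdef
    have hEv_meas : MeasurableSet Ev := by
      have h : Ev = ⋃ n, X n ⁻¹' (U ∪ T) := by ext ω; simp [hEvdef]
      rw [h]; exact MeasurableSet.iUnion fun n => (hXm n) (hU.union hT)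
    have hEvc : ℙ Evᶜ = 0 := by
      rw [measure_compl hEv_meas (measure_ne_top _ _), measure_univ, h_eventually]
      simp
    have hsub2 : A ∩ Ev ⊆ (A ∩ RA) ∪ (A ∩ HU) := by
      rintro ω ⟨hA, hEv⟩
      have hex : ∃ n, X n ω ∈ U ∪ T := hEv
      have hmin : ∀ m < Nat.find hex, X m ω ∉ U ∪ T := fun m hm => Nat.find_min hex hm
      rcases Nat.find_spec hex with hUc | hTc
      · exact Or.inr ⟨hA, Nat.find hex, hUc, hmin⟩
      · exact Or.inl ⟨hA, Nat.find hex, hTc, hmin⟩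
    calc ℙ A ≤ ℙ ((A ∩ Ev) ∪ Evᶜ) := measure_mono (fun ω hω => by
          by_cases h : ω ∈ Ev
          · exact Or.inl ⟨hω, h⟩
          · exact Or.inr h)
      _ ≤ ℙ (A ∩ Ev) + ℙ Evᶜ := measure_union_le _ _
      _ = ℙ (A ∩ Ev) := by rw [hEvc, add_zero]
      _ ≤ ℙ ((A ∩ RA) ∪ (A ∩ HU)) := measure_mono hsub2
      _ ≤ ℙ (A ∩ RA) + ℙ (A ∩ HU) := measure_union_le _ _
      _ ≤ ℙ (A ∩ RA) + ENNReal.ofReal p := add_le_add_right hHUp _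
  -- Step 4: conclude by arithmetic in `ℝ≥0∞`.
  rw [ProbabilityTheory.cond_apply hA_meas ℙ RA, ← ENNReal.div_eq_inv_mul]
  have ha0 : ℙ A ≠ 0 := (lt_of_lt_of_le (ENNReal.ofReal_pos.mpr hq) hAq).ne'
  have haT : ℙ A ≠ ⊤ := measure_ne_top ℙ A
  rw [ENNReal.le_div_iff_mul_le (Or.inl ha0) (Or.inl haT)]
  have hr : ℙ A - ENNReal.ofReal p ≤ ℙ (A ∩ RA) := tsub_le_iff_right.mpr hcover
  have h1 : ENNReal.ofReal (1 - p/q) = 1 - ENNReal.ofReal (p/q) := by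
    rw [ENNReal.ofReal_sub 1 (div_nonneg hp0 hq.le), ENNReal.ofReal_one]
  have h2 : (1 - ENNReal.ofReal (p/q)) * ℙ A = 1 * ℙ A - ENNReal.ofReal (p/q) * ℙ A :=
    ENNReal.sub_mul (fun _ _ => haT)
  have h3 : ENNReal.ofReal p ≤ ENNReal.ofReal (p/q) * ℙ A := by
    have heq : ENNReal.ofReal p = ENNReal.ofReal (p/q) * ENNReal.ofReal q := by
      rw [← ENNReal.ofReal_mul (div_nonneg hp0 hq.le), div_mul_cancel₀ _ hq.ne']
    rw [heq]
    exact mul_le_mul' le_rfl hAq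
  calc ENNReal.ofReal (1 - p/q) * ℙ A = 1 * ℙ A - ENNReal.ofReal (p/q) * ℙ A := by
        rw [h1, h2]
    _ = ℙ A - ENNReal.ofReal (p/q) * ℙ A := by rw [one_mul]
    _ ≤ ℙ A - ENNReal.ofReal p := tsub_le_tsub_left h3 _
    _ ≤ ℙ (A ∩ RA) := hr
end
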